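/- arXiv:1811.07413 — 10 statements merged into one kernel-verified Lean document; each statement's English description precedes it below -/
import Mathlib

section
/- Let (J, m) be a laminar MaxT instance (i.e., the family {χ_j : j ∈ J} of job time windows is laminar), let λ ∈ (0,1) satisfy p_j ≤ λ·|χ_j| for every job j ∈ J, and let W denote the maximum of Σ_{j∈S} w_j over all feasibly schedulable subsets S ⊆ J. Then for every ω ∈ (0, 1 − λ/m], there exists a subset S ⊆ J such that Σ_{j∈S} w_j ≥ ω·W and, for every interval χ ∈ {χ_j : j ∈ J}, Σ_{j∈S : χ_j ⊆ χ} a_j ≤ (ω + λ/m)·m·|χ|. -/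
open Finset

/-- A subset `S` of jobs is feasibly schedulable on `m` identical hosts:
for each job `j ∈ S` one can pick a set of exactly `p j` time slots inside its
time window `[r j, d j]` and a host for each chosen slot, so that at every host
and every time slot, the total size of jobs running there is at most `1`. -/
def Schedulable {ι : Type*} (m : ℕ) (r d : ι → ℤ) (p : ι → ℕ) (s : ι → ℝ)
    (S : Finset ι) : Prop :=
  ∃ (Tj : ι → Finset ℤ) (h : ι → ℤ → Fin m),
    (∀ j ∈ S, Tj j ⊆ Finset.Icc (r j) (d j) ∧ (Tj j).card = p j) ∧
    ∀ (i : Fin m) (t : ℤ),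
      ∑ j ∈ S.filter (fun j => t ∈ Tj j ∧ h j t = i), s j ≤ 1

/-- The family of time windows `{[r j, d j] : j}` is laminar. -/
def LaminarWindows {ι : Type*} (r d : ι → ℤ) : Prop :=
  ∀ j k : ι,
    Finset.Icc (r j) (d j) ⊆ Finset.Icc (r k) (d k) ∨
    Finset.Icc (r k) (d k) ⊆ Finset.Icc (r j) (d j) ∨
    Disjoint (Finset.Icc (r j) (d j)) (Finset.Icc (r k) (d k))

/-!
Fix an optimal schedulable set `O`. Every window `χ_k` receives at most `m·|χ_k|` of area from
`O`. Scan `O` greedily by decreasing density `w/a` and keep a job whenever, afterwards, every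
window `χ_k` still holds at most `(ω·m + λ)·|χ_k|` of kept area. A rejected job `j` overflows
some window `χ_k ⊇ χ_j`; since `a_j ≤ λ·|χ_k|`, the kept jobs of density at least that of `j`
already fill `ω·m·|χ_k|` of `χ_k`. For every density threshold `t`, the inclusion-maximal such
windows are pairwise disjoint by laminarity, and inside each of them the capacity bound gives
`ω · (rejected area) ≤ (1 - ω) · (kept area)` above `t`. Integrating over `t` turns these area
inequalities into `ω · w(O \ S) ≤ (1 - ω) · w(S)`.
-/

open MeasureTheory

section

variable {ι α : Type*}

theorem Schedulable.sum_filter_subset_le {m : ℕ} {r d : ι → ℤ} {p : ι → ℕ} {s : ι → ℝ}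
    {O : Finset ι} (hO : Schedulable m r d p s O) (hs : ∀ j, 0 ≤ s j) (I : Finset ℤ) :
    ∑ j ∈ O with Icc (r j) (d j) ⊆ I, (p j : ℝ) * s j ≤ m * #I := by
  classical
  obtain ⟨T, h, hT, hload⟩ := hO
  have hslot : ∀ t, ∑ j ∈ O with t ∈ T j, s j ≤ m := fun t => by
    rw [← sum_fiberwise _ (fun j => h j t)]
    simpa [filter_filter] using sum_le_sum fun i (_ : i ∈ univ) => hload i t
  calc ∑ j ∈ O with Icc (r j) (d j) ⊆ I, (p j : ℝ) * s j
      = ∑ j ∈ O with Icc (r j) (d j) ⊆ I, ∑ t ∈ I, if t ∈ T j then s j else 0 := by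
        refine sum_congr rfl fun j hj => ?_
        obtain ⟨hjO, hjI⟩ := mem_filter.mp hj
        rw [sum_ite_mem, inter_eq_right.mpr ((hT j hjO).1.trans hjI), sum_const, (hT j hjO).2,
          nsmul_eq_mul]
    _ = ∑ t ∈ I, ∑ j ∈ O with Icc (r j) (d j) ⊆ I ∧ t ∈ T j, s j := by
        rw [sum_comm]
        simp only [sum_ite, sum_const_zero, add_zero, filter_filter]
    _ ≤ ∑ t ∈ I, ∑ j ∈ O with t ∈ T j, s j :=
        sum_le_sum fun t _ => sum_le_sum_of_subset_of_nonneg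
          (monotone_filter_right _ fun _ _ hj => hj.2) fun j _ _ => hs j
    _ ≤ m * #I := by
        rw [mul_comm, ← nsmul_eq_mul, ← sum_const]
        exact sum_le_sum fun t _ => hslot t

theorem Finset.exists_greedy_subset [DecidableEq ι] {β : Type*} [LinearOrder β]
    {P : Finset ι → Prop} (hP : ∀ ⦃s t⦄, s ⊆ t → P t → P s) (h₀ : P ∅) (ρ : ι → β)
    (O : Finset ι) :
    ∃ S ⊆ O, P S ∧ ∀ j ∈ O \ S, ¬ P (insert j {i ∈ S | ρ j ≤ ρ i}) := by
  induction O using Finset.induction_on_min_value ρ with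
  | empty => exact ⟨∅, subset_rfl, h₀, by simp⟩
  | insert b O hbO hbmin ih =>
    obtain ⟨S, hSO, hS, hrej⟩ := ih
    by_cases hb : P (insert b S)
    · refine ⟨insert b S, insert_subset_insert b hSO, hb, fun j hj hPj => ?_⟩
      have hjO : j ∈ O \ S := by
        simp only [mem_sdiff, mem_insert, not_or] at hj ⊢
        exact ⟨hj.1.resolve_left hj.2.1, hj.2.2⟩
      refine hrej j hjO (hP (insert_subset_insert j ?_) hPj)
      exact filter_subset_filter _ (subset_insert b S)
    · refine ⟨S, hSO.trans (subset_insert b O), hS, fun j hj => ?_⟩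
      obtain ⟨hjbO, hjS⟩ := mem_sdiff.mp hj
      rcases mem_insert.mp hjbO with rfl | hjO
      · rwa [filter_true_of_mem fun i hi => hbmin i (hSO hi)]
      · exact hrej j (mem_sdiff.mpr ⟨hjO, hjS⟩)

theorem sum_mul_le_sum_mul_of_forall_sum_filter_le {R S : Finset ι} {f g ρ : ι → ℝ}
    (hρR : ∀ j ∈ R, 0 ≤ ρ j) (hρS : ∀ j ∈ S, 0 ≤ ρ j)
    (h : ∀ t, 0 < t → ∑ j ∈ R with t ≤ ρ j, f j ≤ ∑ j ∈ S with t ≤ ρ j, g j) :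
    ∑ j ∈ R, f j * ρ j ≤ ∑ j ∈ S, g j * ρ j := by
  classical
  let F (X : Finset ι) (f : ι → ℝ) (t : ℝ) : ℝ :=
    ∑ j ∈ X, (Set.Ioc 0 (ρ j)).indicator (fun _ => f j) t
  have hterm_int (j : ι) (c : ℝ) : Integrable ((Set.Ioc 0 (ρ j)).indicator fun _ => c) :=
    (integrable_indicator_iff measurableSet_Ioc).mpr (integrableOn_const measure_Ioc_lt_top.ne)
  have hF_int (X f) : Integrable (F X f) := integrable_finsetSum X fun j _ => hterm_int j (f j)
  have hF_integral (X f) (hX : ∀ j ∈ X, 0 ≤ ρ j) : ∫ t, F X f t = ∑ j ∈ X, f j * ρ j := by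
    rw [integral_finsetSum X fun j _ => hterm_int j (f j)]
    refine sum_congr rfl fun j hj => ?_
    rw [integral_indicator_const _ measurableSet_Ioc, Real.volume_real_Ioc_of_le (hX j hj),
      sub_zero, smul_eq_mul, mul_comm]
  have hF_apply (X f) {t : ℝ} (ht : 0 < t) : F X f t = ∑ j ∈ X with t ≤ ρ j, f j := by
    simp only [F, Set.indicator_apply, Set.mem_Ioc, ht, true_and, sum_ite, sum_const_zero, add_zero]
  have hF_le (t : ℝ) : F R f t ≤ F S g t := by
    rcases le_or_gt t 0 with ht | ht
    · simp [F, Set.indicator_of_notMem, Set.mem_Ioc, ht.not_gt]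
    · rw [hF_apply R f ht, hF_apply S g ht]
      exact h t ht
  rw [← hF_integral R f hρR, ← hF_integral S g hρS]
  exact integral_mono (hF_int R f) (hF_int S g) hF_le

section Laminar

variable [DecidableEq α] {χ : ι → Finset α} {a : ι → ℝ}

theorem sum_le_sum_of_laminar_cover (hχ : ∀ j, (χ j).Nonempty)
    (hlam : ∀ j k, χ j ⊆ χ k ∨ χ k ⊆ χ j ∨ Disjoint (χ j) (χ k))
    {R S : Finset ι} {f g : ι → ℝ} (hg : ∀ j ∈ S, 0 ≤ g j)
    (hcover : ∀ j ∈ R, ∃ k, χ j ⊆ χ k ∧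
      ∑ i ∈ R with χ i ⊆ χ k, f i ≤ ∑ i ∈ S with χ i ⊆ χ k, g i) :
    ∑ j ∈ R, f j ≤ ∑ j ∈ S, g j := by
  classical
  choose! K hK hK_sum using hcover
  set 𝒲 := R.image (χ ∘ K)
  set M := {I ∈ 𝒲 | Maximal (· ∈ 𝒲) I}
  have hM_disj : (M : Set (Finset α)).PairwiseDisjoint id := by
    intro I hI I' hI' hne
    obtain ⟨hI𝒲, hImax⟩ := mem_filter.mp hI
    obtain ⟨hI'𝒲, hI'max⟩ := mem_filter.mp hI'
    obtain ⟨j, -, rfl⟩ := mem_image.mp hI𝒲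
    obtain ⟨j', -, rfl⟩ := mem_image.mp hI'𝒲
    rcases hlam (K j) (K j') with h | h | h
    · exact absurd (hImax.eq_of_le hI'𝒲 h) hne
    · exact absurd (hI'max.eq_of_le hI𝒲 h).symm hne
    · exact h
  have hM_fibers (X : Finset ι) :
      (M : Set (Finset α)).PairwiseDisjoint fun I => {j ∈ X | χ j ⊆ I} := by
    intro I hI I' hI' hne
    refine disjoint_filter.mpr fun j _ hjI hjI' => ?_
    obtain ⟨x, hx⟩ := hχ j
    exact disjoint_left.mp (hM_disj hI hI' hne) (hjI hx) (hjI' hx)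
  have hR : M.biUnion (fun I => {j ∈ R | χ j ⊆ I}) = R := by
    refine (biUnion_subset.mpr fun _ _ => filter_subset _ _).antisymm fun j hj => ?_
    obtain ⟨I, hKI, hI⟩ := 𝒲.exists_le_maximal (mem_image_of_mem (χ ∘ K) hj)
    exact mem_biUnion.mpr
      ⟨I, mem_filter.mpr ⟨hI.prop, hI⟩, mem_filter.mpr ⟨hj, (hK j hj).trans hKI⟩⟩
  calc ∑ j ∈ R, f j = ∑ I ∈ M, ∑ j ∈ R with χ j ⊆ I, f j := by
        rw [← sum_biUnion (hM_fibers R), hR]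
    _ ≤ ∑ I ∈ M, ∑ j ∈ S with χ j ⊆ I, g j := sum_le_sum fun I hI => by
        obtain ⟨j, hj, rfl⟩ := mem_image.mp (mem_filter.mp hI).1
        exact hK_sum j hj
    _ = ∑ j ∈ M.biUnion (fun I => {j ∈ S | χ j ⊆ I}), g j := (sum_biUnion (hM_fibers S)).symm
    _ ≤ ∑ j ∈ S, g j := sum_le_sum_of_subset_of_nonneg
        (biUnion_subset.mpr fun _ _ => filter_subset _ _) fun j hj _ => hg j hj

theorem exists_window_lt_sum_of_not_forall_insert {B δ : ι → ℝ}
    (hδ : ∀ j k, χ j ⊆ χ k → a j ≤ δ k) [DecidableEq ι] {X : Finset ι} {j : ι} (hjX : j ∉ X)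
    (hX : ∀ k, ∑ i ∈ X with χ i ⊆ χ k, a i ≤ B k)
    (hinsert : ¬ ∀ k, ∑ i ∈ insert j X with χ i ⊆ χ k, a i ≤ B k) :
    ∃ k, χ j ⊆ χ k ∧ B k - δ k < ∑ i ∈ X with χ i ⊆ χ k, a i := by
  obtain ⟨k, hk⟩ := not_forall.mp hinsert
  rw [not_le] at hk
  by_cases hjk : χ j ⊆ χ k
  · rw [filter_insert, if_pos hjk, sum_insert fun h => hjX (mem_filter.mp h).1] at hk
    exact ⟨k, hjk, by linarith [hδ j k hjk]⟩
  · rw [filter_insert, if_neg hjk] at hk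
    exact absurd (hX k) hk.not_ge

theorem sum_filter_le_of_forall_exists_window (hχ : ∀ j, (χ j).Nonempty)
    (hlam : ∀ j k, χ j ⊆ χ k ∨ χ k ⊆ χ j ∨ Disjoint (χ j) (χ k)) (ha : ∀ j, 0 ≤ a j)
    [DecidableEq ι] {C : ι → ℝ} {O S : Finset ι} (hSO : S ⊆ O)
    (hcap : ∀ k, ∑ j ∈ O with χ j ⊆ χ k, a j ≤ C k) {ω : ℝ} (hω0 : 0 ≤ ω) (hω1 : ω ≤ 1)
    {ρ : ι → ℝ} (hwit : ∀ j ∈ O \ S, ∃ k, χ j ⊆ χ k ∧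
      ω * C k < ∑ i ∈ {i ∈ S | ρ j ≤ ρ i} with χ i ⊆ χ k, a i) (t : ℝ) :
    ∑ j ∈ O \ S with t ≤ ρ j, ω * a j ≤ ∑ j ∈ S with t ≤ ρ j, (1 - ω) * a j := by
  refine sum_le_sum_of_laminar_cover hχ hlam
    (fun j _ => mul_nonneg (sub_nonneg.mpr hω1) (ha j)) fun j hj => ?_
  obtain ⟨hjOS, htj⟩ := mem_filter.mp hj
  obtain ⟨k, hjk, hk⟩ := hwit j hjOS
  refine ⟨k, hjk, ?_⟩
  set Rk := {i ∈ {i ∈ O \ S | t ≤ ρ i} | χ i ⊆ χ k}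
  set Sk := {i ∈ {i ∈ S | t ≤ ρ i} | χ i ⊆ χ k}
  have hSk : ω * C k < ∑ i ∈ Sk, a i :=
    hk.trans_le <| sum_le_sum_of_subset_of_nonneg
      (filter_subset_filter _ <| monotone_filter_right _ fun _ _ => htj.trans) fun i _ _ => ha i
  have hRSk : ∑ i ∈ Rk, a i + ∑ i ∈ Sk, a i ≤ C k := by
    have hdisj : Disjoint Rk Sk := disjoint_filter_filter <| disjoint_filter_filter <|
      sdiff_disjoint
    rw [← sum_union hdisj]
    refine (sum_le_sum_of_subset_of_nonneg ?_ fun i _ _ => ha i).trans (hcap k)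
    refine union_subset (filter_subset_filter _ ?_) (filter_subset_filter _ ?_)
    · exact (filter_subset _ _).trans sdiff_subset
    · exact (filter_subset _ _).trans hSO
  rw [← mul_sum, ← mul_sum]
  nlinarith [mul_le_mul_of_nonneg_left hRSk hω0]

theorem exists_subset_le_sum_weight_of_laminar (hχ : ∀ j, (χ j).Nonempty)
    (hlam : ∀ j k, χ j ⊆ χ k ∨ χ k ⊆ χ j ∨ Disjoint (χ j) (χ k)) (ha : ∀ j, 0 < a j)
    [DecidableEq ι] {w C δ : ι → ℝ} (hw : ∀ j, 0 ≤ w j) (hδ : ∀ j k, χ j ⊆ χ k → a j ≤ δ k)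
    {O : Finset ι} (hcap : ∀ k, ∑ j ∈ O with χ j ⊆ χ k, a j ≤ C k)
    {ω : ℝ} (hω0 : 0 ≤ ω) (hω1 : ω ≤ 1) :
    ∃ S ⊆ O, ω * ∑ j ∈ O, w j ≤ ∑ j ∈ S, w j ∧
      ∀ k, ∑ j ∈ S with χ j ⊆ χ k, a j ≤ ω * C k + δ k := by
  let ρ j := w j / a j
  have hwρ (j : ι) : a j * ρ j = w j := mul_div_cancel₀ _ (ha j).ne'
  have harea_mono ⦃X Y : Finset ι⦄ (hXY : X ⊆ Y) (k : ι) :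
      ∑ i ∈ X with χ i ⊆ χ k, a i ≤ ∑ i ∈ Y with χ i ⊆ χ k, a i :=
    sum_le_sum_of_subset_of_nonneg (filter_subset_filter _ hXY) fun i _ _ => (ha i).le
  have hbudget_nonneg (k : ι) : (0 : ℝ) ≤ ω * C k + δ k := by
    have hC : 0 ≤ C k := (sum_nonneg fun i _ => (ha i).le).trans (hcap k)
    have hδk : 0 ≤ δ k := (ha k).le.trans (hδ k k subset_rfl)
    positivity
  obtain ⟨S, hSO, hS, hrej⟩ := exists_greedy_subset
    (P := fun X => ∀ k, ∑ i ∈ X with χ i ⊆ χ k, a i ≤ ω * C k + δ k)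
    (fun X Y hXY hY k => (harea_mono hXY k).trans (hY k)) (by simpa using hbudget_nonneg) ρ O
  have hwit (j : ι) (hj : j ∈ O \ S) : ∃ k, χ j ⊆ χ k ∧
      ω * C k < ∑ i ∈ {i ∈ S | ρ j ≤ ρ i} with χ i ⊆ χ k, a i := by
    have hjS : j ∉ {i ∈ S | ρ j ≤ ρ i} := fun h => (mem_sdiff.mp hj).2 (mem_filter.mp h).1
    simpa using exists_window_lt_sum_of_not_forall_insert hδ hjS
      (fun k => (harea_mono (filter_subset _ S) k).trans (hS k)) (hrej j hj)
  have hρ (j : ι) : 0 ≤ ρ j := div_nonneg (hw j) (ha j).le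
  have hlayer := sum_mul_le_sum_mul_of_forall_sum_filter_le (fun j _ => hρ j) (fun j _ => hρ j)
    fun t _ => sum_filter_le_of_forall_exists_window hχ hlam (fun j => (ha j).le) hSO hcap hω0 hω1
      hwit t
  simp only [mul_assoc, hwρ, ← mul_sum] at hlayer
  refine ⟨S, hSO, ?_, hS⟩
  rw [← sum_sdiff hSO]
  linarith

end Laminar

end

theorem stmt_0_general {ι : Type*}
    (m : ℕ) (hm : 1 ≤ m)
    (r d : ι → ℤ) (p : ι → ℕ) (s w : ι → ℝ)
    (hrd : ∀ j, r j ≤ d j)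
    (hp1 : ∀ j, 1 ≤ p j)
    (hs0 : ∀ j, 0 < s j) (hs1 : ∀ j, s j ≤ 1)
    (hw : ∀ j, 0 < w j)
    (hlamin : LaminarWindows r d)
    (lam : ℝ) (hlam0 : 0 < lam)
    (hslack : ∀ j, (p j : ℝ) ≤ lam * ((d j - r j + 1 : ℤ) : ℝ))
    (W : ℝ)
    (hWach : ∃ O : Finset ι, Schedulable m r d p s O ∧ ∑ j ∈ O, w j = W)
    (ω : ℝ) (hω0 : 0 < ω) (hω1 : ω ≤ 1 - lam / m) :
    ∃ S : Finset ι,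
      ω * W ≤ ∑ j ∈ S, w j ∧
      ∀ k : ι,
        ∑ j ∈ S.filter (fun j => Finset.Icc (r j) (d j) ⊆ Finset.Icc (r k) (d k)),
            (p j : ℝ) * s j
          ≤ (ω + lam / m) * m * ((d k - r k + 1 : ℤ) : ℝ) := by
  classical
  obtain ⟨O, hO, rfl⟩ := hWach
  have hm0 : (m : ℝ) ≠ 0 := by positivity
  have hcard (k : ι) : (#(Icc (r k) (d k)) : ℝ) = ((d k - r k + 1 : ℤ) : ℝ) := by
    have h : (#(Icc (r k) (d k)) : ℤ) = d k + 1 - r k :=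
      Int.card_Icc_of_le _ _ (by linarith [hrd k])
    rw [← Int.cast_natCast, h]
    ring_nf
  have harea_le (j k : ι) (hjk : Icc (r j) (d j) ⊆ Icc (r k) (d k)) :
      (p j : ℝ) * s j ≤ lam * #(Icc (r k) (d k)) := calc
    (p j : ℝ) * s j ≤ p j := mul_le_of_le_one_right (Nat.cast_nonneg _) (hs1 j)
    _ ≤ lam * #(Icc (r j) (d j)) := (hcard j).symm ▸ hslack j
    _ ≤ lam * #(Icc (r k) (d k)) := by gcongr
  obtain ⟨S, -, hSw, hSarea⟩ := exists_subset_le_sum_weight_of_laminar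
    (fun j => nonempty_Icc.mpr (hrd j)) hlamin
    (fun j => mul_pos (Nat.cast_pos.mpr (hp1 j)) (hs0 j)) (fun j => (hw j).le) harea_le
    (fun k => hO.sum_filter_subset_le (fun j => (hs0 j).le) _) hω0.le
    (hω1.trans (sub_le_self _ (by positivity)))
  refine ⟨S, hSw, fun k => (hSarea k).trans_eq ?_⟩
  rw [hcard]
  field_simp

theorem stmt_0 {ι : Type*} [Fintype ι]
    (m : ℕ) (hm : 1 ≤ m)
    (r d : ι → ℤ) (p : ι → ℕ) (s w : ι → ℝ)
    (hrd : ∀ j, r j ≤ d j)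
    (hp1 : ∀ j, 1 ≤ p j)
    (hpw : ∀ j, (p j : ℤ) ≤ d j - r j + 1)
    (hs0 : ∀ j, 0 < s j) (hs1 : ∀ j, s j ≤ 1)
    (hw : ∀ j, 0 < w j)
    (hlamin : LaminarWindows r d)
    (lam : ℝ) (hlam0 : 0 < lam) (hlam1 : lam < 1)
    (hslack : ∀ j, (p j : ℝ) ≤ lam * ((d j - r j + 1 : ℤ) : ℝ))
    (W : ℝ)
    (hWach : ∃ O : Finset ι, Schedulable m r d p s O ∧ ∑ j ∈ O, w j = W)
    (hWmax : ∀ O : Finset ι, Schedulable m r d p s O → ∑ j ∈ O, w j ≤ W)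
    (ω : ℝ) (hω0 : 0 < ω) (hω1 : ω ≤ 1 - lam / m) :
    ∃ S : Finset ι,
      ω * W ≤ ∑ j ∈ S, w j ∧
      ∀ k : ι,
        ∑ j ∈ S.filter (fun j => Finset.Icc (r j) (d j) ⊆ Finset.Icc (r k) (d k)),
            (p j : ℝ) * s j
          ≤ (ω + lam / m) * m * ((d k - r k + 1 : ℤ) : ℝ) :=
  stmt_0_general m hm r d p s w hrd hp1 hs0 hs1 hw hlamin lam hlam0 hslack W hWach ω hω0 hω1
end

section
/- Let (J, m) be a laminar MaxT instance with p_j ≤ λ·|χ_j| for every j ∈ J, where λ ∈ (0,1). Suppose S⁺ ⊆ J is a subset of total weight W = Σ_{j∈S⁺} w_j satisfying, for every χ ∈ {χ_j : j ∈ J}, Σ_{j∈S⁺ : χ_j ⊆ χ} a_j ≤ c·m·|χ| for some real c ≥ 1. Then for every ω ∈ (0, 1 − λ/m], there exists a subset S ⊆ J with Σ_{j∈S} w_j ≥ (ω/c)·W such that for every χ ∈ {χ_j : j ∈ J}, Σ_{j∈S : χ_j ⊆ χ} a_j ≤ (ω + λ/m)·m·|χ|. -/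
open Finset

section helpers
variable {ι : Type*} [DecidableEq ι]

lemma sum_mul_update (a y : ι → ℝ) (X : Finset ι) (j : ι) (v : ℝ) :
    ∑ x ∈ X, a x * Function.update y j v x =
      (∑ x ∈ X, a x * y x) + (if j ∈ X then a j * (v - y j) else 0) := by
  by_cases h : j ∈ X
  · simp only [if_pos h]
    rw [← Finset.sum_erase_add _ _ h, ← Finset.sum_erase_add X (fun x => a x * y x) h]
    have h1 : ∑ x ∈ X.erase j, a x * Function.update y j v x
        = ∑ x ∈ X.erase j, a x * y x := by
      refine Finset.sum_congr rfl fun x hx => ?_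
      rw [Function.update_apply, if_neg (Finset.ne_of_mem_erase hx)]
    rw [h1, Function.update_self]
    ring
  · simp only [if_neg h, add_zero]
    refine Finset.sum_congr rfl fun x hx => ?_
    rw [Function.update_apply, if_neg]
    rintro rfl; exact h hx

lemma sum_two_swap_eq (X : Finset ι) (f g : ι → ℝ) (j k : ι) (hjk : j ≠ k)
    (hj : j ∈ X) (hk : k ∈ X)
    (hother : ∀ x, x ≠ j → x ≠ k → f x = g x)
    (hsum : f j + f k = g j + g k) :
    ∑ x ∈ X, f x = ∑ x ∈ X, g x := by
  have hk' : k ∈ X.erase j := Finset.mem_erase.2 ⟨hjk.symm, hk⟩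
  rw [← Finset.sum_erase_add _ f hj, ← Finset.sum_erase_add _ g hj,
      ← Finset.sum_erase_add _ f hk', ← Finset.sum_erase_add _ g hk']
  have h1 : ∑ x ∈ (X.erase j).erase k, f x = ∑ x ∈ (X.erase j).erase k, g x := by
    refine Finset.sum_congr rfl fun x hx => ?_
    exact hother x (Finset.ne_of_mem_erase (Finset.mem_of_mem_erase hx))
      (Finset.ne_of_mem_erase hx)
  rw [h1]; linarith

lemma sum_two_swap_le (X : Finset ι) (f g : ι → ℝ) (j k : ι) (hjk : j ≠ k)
    (hj : j ∈ X) (hk : k ∈ X)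
    (hother : ∀ x, x ≠ j → x ≠ k → f x = g x)
    (hsum : f j + f k ≤ g j + g k) :
    ∑ x ∈ X, f x ≤ ∑ x ∈ X, g x := by
  have hk' : k ∈ X.erase j := Finset.mem_erase.2 ⟨hjk.symm, hk⟩
  rw [← Finset.sum_erase_add _ f hj, ← Finset.sum_erase_add _ g hj,
      ← Finset.sum_erase_add _ f hk', ← Finset.sum_erase_add _ g hk']
  have h1 : ∑ x ∈ (X.erase j).erase k, f x = ∑ x ∈ (X.erase j).erase k, g x := by
    refine Finset.sum_congr rfl fun x hx => ?_
    exact hother x (Finset.ne_of_mem_erase (Finset.mem_of_mem_erase hx))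
      (Finset.ne_of_mem_erase hx)
  rw [h1]; linarith

end helpers

section pipage
variable {ι : Type*} [DecidableEq ι]

lemma pipage (a w y : ι → ℝ) (ha : ∀ x, 0 < a x) (hw : ∀ x, 0 ≤ w x)
    (hy0 : ∀ x, 0 ≤ y x) (hy1 : ∀ x, y x ≤ 1)
    (j k : ι) (hjk : j ≠ k)
    (hj0 : y j ≠ 0) (hj1 : y j ≠ 1) (hk0 : y k ≠ 0) (hk1 : y k ≠ 1)
    (hdir : w k * a j ≤ w j * a k) :
    ∃ y' : ι → ℝ, (∀ x, 0 ≤ y' x) ∧ (∀ x, y' x ≤ 1) ∧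
      (∀ x, x ≠ j → x ≠ k → y' x = y x) ∧
      (a j * y' j + a k * y' k = a j * y j + a k * y k) ∧
      (w j * y j + w k * y k ≤ w j * y' j + w k * y' k) ∧
      (y' j = 1 ∨ y' k = 0) ∧
      (∀ x, y' x ≠ 0 → y x ≠ 0) ∧
      (∀ x, y' x ≠ 0 ∧ y' x ≠ 1 → y x ≠ 0 ∧ y x ≠ 1) := by
  have hyj1 : y j < 1 := lt_of_le_of_ne (hy1 j) hj1
  have hyk0 : 0 < y k := lt_of_le_of_ne (hy0 k) (Ne.symm hk0)
  set t : ℝ := min ((1 - y j) / a k) (y k / a j) with ht_def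
  have ht0 : 0 < t := lt_min (div_pos (by linarith) (ha k)) (div_pos hyk0 (ha j))
  set y' : ι → ℝ := Function.update (Function.update y j (y j + a k * t)) k (y k - a j * t)
    with hy'_def
  have hy'j : y' j = y j + a k * t := by
    rw [hy'_def, Function.update_of_ne hjk, Function.update_self]
  have hy'k : y' k = y k - a j * t := by
    rw [hy'_def, Function.update_self]
  have hy'o : ∀ x, x ≠ j → x ≠ k → y' x = y x := by
    intro x hxj hxk
    rw [hy'_def, Function.update_of_ne hxk, Function.update_of_ne hxj]
  have htj : a k * t ≤ 1 - y j := by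
    have := mul_le_mul_of_nonneg_left (min_le_left ((1 - y j) / a k) (y k / a j))
      (le_of_lt (ha k))
    rwa [mul_comm (a k) ((1 - y j) / a k), div_mul_cancel₀ _ (ne_of_gt (ha k))] at this
  have htk : a j * t ≤ y k := by
    have := mul_le_mul_of_nonneg_left (min_le_right ((1 - y j) / a k) (y k / a j))
      (le_of_lt (ha j))
    rwa [mul_comm (a j) (y k / a j), div_mul_cancel₀ _ (ne_of_gt (ha j))] at this
  have hbd0 : ∀ x, 0 ≤ y' x := by
    intro x
    by_cases hxk : x = k
    · rw [hxk, hy'k]; linarith [htk, hy0 k, hyk0]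
    by_cases hxj : x = j
    · rw [hxj, hy'j]
      have : 0 ≤ a k * t := le_of_lt (mul_pos (ha k) ht0)
      linarith [hy0 j]
    · rw [hy'o x hxj hxk]; exact hy0 x
  have hbd1 : ∀ x, y' x ≤ 1 := by
    intro x
    by_cases hxk : x = k
    · rw [hxk, hy'k]
      have : 0 ≤ a j * t := le_of_lt (mul_pos (ha j) ht0)
      linarith [hy1 k]
    by_cases hxj : x = j
    · rw [hxj, hy'j]; linarith
    · rw [hy'o x hxj hxk]; exact hy1 x
  have harea : a j * y' j + a k * y' k = a j * y j + a k * y k := by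
    rw [hy'j, hy'k]; ring
  have hwt : w j * y j + w k * y k ≤ w j * y' j + w k * y' k := by
    rw [hy'j, hy'k]
    have h2 : t * (w k * a j) ≤ t * (w j * a k) :=
      mul_le_mul_of_nonneg_left hdir (le_of_lt ht0)
    nlinarith
  have hbdry : y' j = 1 ∨ y' k = 0 := by
    rcases le_total ((1 - y j) / a k) (y k / a j) with h | h
    · left
      rw [hy'j, ht_def, min_eq_left h, mul_comm, div_mul_cancel₀ _ (ne_of_gt (ha k))]
      ring
    · right
      rw [hy'k, ht_def, min_eq_right h, mul_comm, div_mul_cancel₀ _ (ne_of_gt (ha j))]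
      ring
  refine ⟨y', hbd0, hbd1, hy'o, harea, hwt, hbdry, ?_, ?_⟩
  · intro x hx
    by_cases hxj : x = j
    · rw [hxj] at hx ⊢; exact hj0
    by_cases hxk : x = k
    · rw [hxk] at hx ⊢; exact hk0
    · rwa [hy'o x hxj hxk] at hx
  · intro x hx
    by_cases hxj : x = j
    · rw [hxj] at hx ⊢; exact ⟨hj0, hj1⟩
    by_cases hxk : x = k
    · rw [hxk] at hx ⊢; exact ⟨hk0, hk1⟩
    · rwa [hy'o x hxj hxk] at hx

end pipage

section core
open Classical in
/-- Iterated-rounding core lemma: given a fractional point `y` feasible for a laminar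
family of capacity constraints, there is an integral selection `S` of no smaller weight
that violates each constraint by at most `M k` (a bound on single item sizes). -/
lemma IR_core {ι : Type*} [Fintype ι] [DecidableEq ι] {κ : Type*}
    (a w : ι → ℝ) (I : κ → Finset ι) (K M : κ → ℝ)
    (ha : ∀ j, 0 < a j) (hw : ∀ j, 0 ≤ w j) :
    ∀ (n : ℕ) (Ks : Finset κ) (y : ι → ℝ),
      (∀ k ∈ Ks, 0 ≤ M k) →
      (∀ k ∈ Ks, ∀ j ∈ I k, a j ≤ M k) →
      (∀ k ∈ Ks, ∀ l ∈ Ks, I k ⊆ I l ∨ I l ⊆ I k ∨ Disjoint (I k) (I l)) →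
      (∀ j, 0 ≤ y j) → (∀ j, y j ≤ 1) →
      (∀ k ∈ Ks, ∑ j ∈ I k, a j * y j ≤ K k) →
      Ks.card + (univ.filter (fun j => y j ≠ 0 ∧ y j ≠ 1)).card = n →
      ∃ S : Finset ι,
        ((∑ j, w j * y j) ≤ ∑ j ∈ S, w j) ∧ (∀ j ∈ S, y j ≠ 0) ∧
        (∀ k ∈ Ks, ∑ j ∈ S ∩ I k, a j ≤ K k + M k) := by
  intro n
  induction n using Nat.strong_induction_on with
  | _ n IH =>
    intro Ks y hM0 hM hlamK hy0 hy1 hfeas hn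
    by_cases hT1 : ∀ j, y j = 0 ∨ y j = 1
    -- terminal case: y integral
    · refine ⟨univ.filter (fun j => y j = 1), ?_, ?_, ?_⟩
      · rw [← Finset.sum_filter_add_sum_filter_not univ (fun j => y j = 1)
            (fun j => w j * y j)]
        have h2 : ∑ j ∈ univ.filter (fun j => ¬ y j = 1), w j * y j = 0 := by
          refine Finset.sum_eq_zero fun x hx => ?_
          rcases hT1 x with h | h
          · rw [h, mul_zero]
          · exact absurd h (Finset.mem_filter.1 hx).2
        have h1 : ∑ j ∈ univ.filter (fun j => y j = 1), w j * y j
            = ∑ j ∈ univ.filter (fun j => y j = 1), w j := by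
          refine Finset.sum_congr rfl fun x hx => ?_
          rw [(Finset.mem_filter.1 hx).2, mul_one]
        rw [h1, h2, add_zero]
      · intro x hx
        rw [(Finset.mem_filter.1 hx).2]; norm_num
      · intro k hk
        have hset : (univ.filter (fun j => y j = 1)) ∩ I k
            = (I k).filter (fun j => y j = 1) := by
          ext x
          simp only [Finset.mem_inter, Finset.mem_filter, Finset.mem_univ, true_and]
          tauto
        rw [hset]
        have h1 : ∑ j ∈ (I k).filter (fun j => y j = 1), a j
            = ∑ j ∈ (I k).filter (fun j => y j = 1), a j * y j := by
          refine Finset.sum_congr rfl fun x hx => ?_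
          rw [(Finset.mem_filter.1 hx).2, mul_one]
        rw [h1]
        have h2 : ∑ j ∈ (I k).filter (fun j => y j = 1), a j * y j
            ≤ ∑ j ∈ I k, a j * y j := by
          refine Finset.sum_le_sum_of_subset_of_nonneg (Finset.filter_subset _ _)
            fun x _ _ => mul_nonneg (le_of_lt (ha x)) (hy0 x)
        have := hfeas k hk
        have := hM0 k hk
        linarith
    -- there is a fractional coordinate
    · push_neg at hT1
      obtain ⟨j₀, hj₀0, hj₀1⟩ := hT1
      have hj₀F : j₀ ∈ univ.filter (fun j => y j ≠ 0 ∧ y j ≠ 1) := by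
        simp only [Finset.mem_filter, Finset.mem_univ, true_and]; exact ⟨hj₀0, hj₀1⟩
      by_cases hT2a : ∃ k ∈ Ks, ((I k).filter (fun j => y j ≠ 0 ∧ y j ≠ 1)).card ≤ 1
      -- a constraint with at most one fractional variable: drop it
      · obtain ⟨k, hkKs, hk1⟩ := hT2a
        have hmeas : (Ks.erase k).card + (univ.filter (fun j => y j ≠ 0 ∧ y j ≠ 1)).card < n := by
          have := Finset.card_erase_lt_of_mem hkKs
          omega
        obtain ⟨S, hSw, hSnz, hScons⟩ :=
          IH _ hmeas (Ks.erase k) y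
            (fun l hl => hM0 l (Finset.mem_of_mem_erase hl))
            (fun l hl => hM l (Finset.mem_of_mem_erase hl))
            (fun l hl l' hl' => hlamK l (Finset.mem_of_mem_erase hl) l'
              (Finset.mem_of_mem_erase hl'))
            hy0 hy1
            (fun l hl => hfeas l (Finset.mem_of_mem_erase hl)) rfl
        refine ⟨S, hSw, hSnz, ?_⟩
        intro l hl
        by_cases hlk : l = k
        · subst hlk
          -- the dropped constraint
          have hsub : S ∩ I l ⊆ (I l).filter (fun x => y x = 1)
              ∪ (I l).filter (fun x => y x ≠ 0 ∧ y x ≠ 1) := by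
            intro x hx
            obtain ⟨hxS, hxI⟩ := Finset.mem_inter.1 hx
            have hx0 := hSnz x hxS
            by_cases hx1 : y x = 1
            · exact Finset.mem_union_left _ (Finset.mem_filter.2 ⟨hxI, hx1⟩)
            · exact Finset.mem_union_right _ (Finset.mem_filter.2 ⟨hxI, hx0, hx1⟩)
          have hle1 : ∑ x ∈ S ∩ I l, a x
              ≤ ∑ x ∈ (I l).filter (fun x => y x = 1)
                  ∪ (I l).filter (fun x => y x ≠ 0 ∧ y x ≠ 1), a x :=
            Finset.sum_le_sum_of_subset_of_nonneg hsub fun x _ _ => le_of_lt (ha x)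
          have hdisj : Disjoint ((I l).filter (fun x => y x = 1))
              ((I l).filter (fun x => y x ≠ 0 ∧ y x ≠ 1)) := by
            rw [Finset.disjoint_left]
            intro x hx hx'
            exact (Finset.mem_filter.1 hx').2.2 (Finset.mem_filter.1 hx).2
          rw [Finset.sum_union hdisj] at hle1
          have hle2 : ∑ x ∈ (I l).filter (fun x => y x = 1), a x ≤ K l := by
            have h1 : ∑ x ∈ (I l).filter (fun x => y x = 1), a x
                = ∑ x ∈ (I l).filter (fun x => y x = 1), a x * y x := by
              refine Finset.sum_congr rfl fun x hx => ?_
              rw [(Finset.mem_filter.1 hx).2, mul_one]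
            rw [h1]
            have h2 : ∑ x ∈ (I l).filter (fun x => y x = 1), a x * y x
                ≤ ∑ x ∈ I l, a x * y x :=
              Finset.sum_le_sum_of_subset_of_nonneg (Finset.filter_subset _ _)
                fun x _ _ => mul_nonneg (le_of_lt (ha x)) (hy0 x)
            exact le_trans h2 (hfeas l hkKs)
          have hle3 : ∑ x ∈ (I l).filter (fun x => y x ≠ 0 ∧ y x ≠ 1), a x ≤ M l := by
            rcases Nat.eq_or_lt_of_le hk1 with hcard | hcard
            · obtain ⟨x, hx⟩ := Finset.card_eq_one.1 hcard
              rw [hx, Finset.sum_singleton]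
              have hxI : x ∈ I l := by
                have : x ∈ (I l).filter (fun x => y x ≠ 0 ∧ y x ≠ 1) := by
                  rw [hx]; exact Finset.mem_singleton_self x
                exact (Finset.mem_filter.1 this).1
              exact hM l hkKs x hxI
            · have : ((I l).filter (fun x => y x ≠ 0 ∧ y x ≠ 1)).card = 0 := by omega
              rw [Finset.card_eq_zero.1 this, Finset.sum_empty]
              exact hM0 l hkKs
          linarith
        · exact hScons l (Finset.mem_erase.2 ⟨hlk, hl⟩)
      -- every constraint has ≥ 2 fractional variables
      · push_neg at hT2a
        by_cases hT2bi : ∀ k ∈ Ks, j₀ ∉ I k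
        -- a fractional variable in no constraint: round it up
        · set y' := Function.update y j₀ 1 with hy'_def
          have hy'vals : ∀ x, x ≠ j₀ → y' x = y x := fun x hx =>
            Function.update_of_ne hx _ _
          have hy'j₀ : y' j₀ = 1 := Function.update_self _ _ _
          have hFsub : univ.filter (fun j => y' j ≠ 0 ∧ y' j ≠ 1)
              ⊂ univ.filter (fun j => y j ≠ 0 ∧ y j ≠ 1) := by
            refine Finset.ssubset_iff_of_subset ?_ |>.2 ⟨j₀, hj₀F, ?_⟩
            · intro x hx
              simp only [Finset.mem_filter, Finset.mem_univ, true_and] at hx ⊢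
              by_cases hxj : x = j₀
              · rw [hxj, hy'j₀] at hx; exact absurd rfl hx.2
              · rwa [hy'vals x hxj] at hx
            · simp only [Finset.mem_filter, Finset.mem_univ, true_and, hy'j₀]
              tauto
          have hmeas : Ks.card + (univ.filter (fun j => y' j ≠ 0 ∧ y' j ≠ 1)).card < n := by
            have := Finset.card_lt_card hFsub
            omega
          obtain ⟨S, hSw, hSnz, hScons⟩ :=
            IH _ hmeas Ks y' hM0 hM hlamK
              (fun x => by
                by_cases hxj : x = j₀
                · rw [hxj, hy'j₀]; norm_num
                · rw [hy'vals x hxj]; exact hy0 x)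
              (fun x => by
                by_cases hxj : x = j₀
                · rw [hxj, hy'j₀]
                · rw [hy'vals x hxj]; exact hy1 x)
              (fun k hk => by
                have : ∑ x ∈ I k, a x * y' x = ∑ x ∈ I k, a x * y x := by
                  refine Finset.sum_congr rfl fun x hx => ?_
                  rw [hy'vals x (fun hxx => (hT2bi k hk) (hxx ▸ hx))]
                rw [this]; exact hfeas k hk) rfl
          refine ⟨S, ?_, ?_, hScons⟩
          · -- weight
            have hwy : ∑ j, w j * y j ≤ ∑ j, w j * y' j := by
              rw [hy'_def, sum_mul_update w y univ j₀ 1, if_pos (Finset.mem_univ j₀)]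
              have : 0 ≤ w j₀ * (1 - y j₀) :=
                mul_nonneg (hw j₀) (by linarith [hy1 j₀])
              linarith
            exact le_trans hwy hSw
          · intro x hxS
            have := hSnz x hxS
            by_cases hxj : x = j₀
            · rw [hxj]; exact hj₀0
            · rwa [hy'vals x hxj] at this
        -- pipage step on two fractional variables in a minimal constraint
        · push_neg at hT2bi
          obtain ⟨k₀, hk₀Ks, _⟩ := hT2bi
          have hKsne : Ks.Nonempty := ⟨k₀, hk₀Ks⟩
          obtain ⟨km, hkmKs, hkmmin⟩ := Finset.exists_min_image Ks (fun k => (I k).card) hKsne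
          have h2f : 1 < ((I km).filter (fun j => y j ≠ 0 ∧ y j ≠ 1)).card := hT2a km hkmKs
          obtain ⟨u, hu, v, hv, huv⟩ := Finset.one_lt_card.1 h2f
          have huI : u ∈ I km := (Finset.mem_filter.1 hu).1
          have hvI : v ∈ I km := (Finset.mem_filter.1 hv).1
          have huf := (Finset.mem_filter.1 hu).2
          have hvf := (Finset.mem_filter.1 hv).2
          -- u,v belong to exactly the same constraints
          have hmemeq : ∀ l ∈ Ks, (u ∈ I l ↔ v ∈ I l) := by
            intro l hl
            rcases hlamK km hkmKs l hl with hsub | hsub | hdis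
            · exact iff_of_true (hsub huI) (hsub hvI)
            · have : I l = I km := Finset.eq_of_subset_of_card_le hsub (hkmmin l hl)
              rw [this]; exact iff_of_true huI hvI
            · rw [Finset.disjoint_left] at hdis
              exact iff_of_false (fun h => hdis huI h) (fun h => hdis hvI h)
          -- orient the pipage direction
          have hkey : ∃ y' : ι → ℝ, (∀ x, 0 ≤ y' x) ∧ (∀ x, y' x ≤ 1) ∧
              (∀ x, x ≠ u → x ≠ v → y' x = y x) ∧
              (a u * y' u + a v * y' v = a u * y u + a v * y v) ∧
              (w u * y u + w v * y v ≤ w u * y' u + w v * y' v) ∧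
              (y' u = 1 ∨ y' v = 0 ∨ y' u = 0 ∨ y' v = 1) ∧
              (∀ x, y' x ≠ 0 → y x ≠ 0) ∧
              (∀ x, y' x ≠ 0 ∧ y' x ≠ 1 → y x ≠ 0 ∧ y x ≠ 1) := by
            rcases le_total (w v * a u) (w u * a v) with hdir | hdir
            · obtain ⟨y', h1, h2, h3, h4, h5, h6, h7, h8⟩ :=
                pipage a w y ha hw hy0 hy1 u v huv huf.1 huf.2 hvf.1 hvf.2 hdir
              exact ⟨y', h1, h2, h3, h4, h5, by tauto, h7, h8⟩
            · obtain ⟨y', h1, h2, h3, h4, h5, h6, h7, h8⟩ :=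
                pipage a w y ha hw hy0 hy1 v u (Ne.symm huv) hvf.1 hvf.2 huf.1 huf.2 hdir
              refine ⟨y', h1, h2, fun x h h' => h3 x h' h, by linarith, by linarith,
                by tauto, h7, h8⟩
          obtain ⟨y', hb0, hb1, hother, harea, hwt, hbdry, hnz, hfr⟩ := hkey
          have hFsub : univ.filter (fun j => y' j ≠ 0 ∧ y' j ≠ 1)
              ⊂ univ.filter (fun j => y j ≠ 0 ∧ y j ≠ 1) := by
            have hsub : univ.filter (fun j => y' j ≠ 0 ∧ y' j ≠ 1)
                ⊆ univ.filter (fun j => y j ≠ 0 ∧ y j ≠ 1) := by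
              intro x hx
              simp only [Finset.mem_filter, Finset.mem_univ, true_and] at hx ⊢
              exact hfr x hx
            refine Finset.ssubset_iff_of_subset hsub |>.2 ?_
            rcases hbdry with h | h | h | h
            · exact ⟨u, by simpa [Finset.mem_filter] using huf, by
                simp only [Finset.mem_filter, Finset.mem_univ, true_and, h]; tauto⟩
            · exact ⟨v, by simpa [Finset.mem_filter] using hvf, by
                simp only [Finset.mem_filter, Finset.mem_univ, true_and, h]; tauto⟩
            · exact ⟨u, by simpa [Finset.mem_filter] using huf, by
                simp only [Finset.mem_filter, Finset.mem_univ, true_and, h]; tauto⟩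
            · exact ⟨v, by simpa [Finset.mem_filter] using hvf, by
                simp only [Finset.mem_filter, Finset.mem_univ, true_and, h]; tauto⟩
          have hmeas : Ks.card + (univ.filter (fun j => y' j ≠ 0 ∧ y' j ≠ 1)).card < n := by
            have := Finset.card_lt_card hFsub
            omega
          obtain ⟨S, hSw, hSnz, hScons⟩ :=
            IH _ hmeas Ks y' hM0 hM hlamK hb0 hb1
              (fun l hl => by
                by_cases huIl : u ∈ I l
                · have hvIl : v ∈ I l := (hmemeq l hl).1 huIl
                  have : ∑ x ∈ I l, a x * y' x = ∑ x ∈ I l, a x * y x :=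
                    sum_two_swap_eq (I l) (fun x => a x * y' x) (fun x => a x * y x)
                      u v huv huIl hvIl
                      (fun x hxu hxv => by simp only [hother x hxu hxv]) harea
                  rw [this]; exact hfeas l hl
                · have hvIl : v ∉ I l := fun h => huIl ((hmemeq l hl).2 h)
                  have : ∑ x ∈ I l, a x * y' x = ∑ x ∈ I l, a x * y x := by
                    refine Finset.sum_congr rfl fun x hx => ?_
                    rw [hother x (fun hxx => huIl (hxx ▸ hx)) (fun hxx => hvIl (hxx ▸ hx))]
                  rw [this]; exact hfeas l hl) rfl
          refine ⟨S, ?_, ?_, hScons⟩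
          · have hwy : ∑ j, w j * y j ≤ ∑ j, w j * y' j :=
              sum_two_swap_le univ (fun x => w x * y x) (fun x => w x * y' x)
                u v huv (Finset.mem_univ u) (Finset.mem_univ v)
                (fun x hxu hxv => by simp only [hother x hxu hxv]) hwt
            exact le_trans hwy hSw
          · intro x hxS
            exact hnz x (hSnz x hxS)

end core

theorem stmt_1 {ι : Type*} [Fintype ι]
    (m : ℕ) (hm : 1 ≤ m)
    (r d : ι → ℤ) (p : ι → ℕ) (s w : ι → ℝ)
    (hrd : ∀ j, r j ≤ d j)
    (hp1 : ∀ j, 1 ≤ p j)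
    (hpw : ∀ j, (p j : ℤ) ≤ d j - r j + 1)
    (hs0 : ∀ j, 0 < s j) (hs1 : ∀ j, s j ≤ 1)
    (hw : ∀ j, 0 < w j)
    (hlamin : LaminarWindows r d)
    (lam : ℝ) (hlam0 : 0 < lam) (hlam1 : lam < 1)
    (hslack : ∀ j, (p j : ℝ) ≤ lam * ((d j - r j + 1 : ℤ) : ℝ))
    (c : ℝ) (hc : 1 ≤ c)
    (Splus : Finset ι) (W : ℝ) (hW : W = ∑ j ∈ Splus, w j)
    (hSplus : ∀ k : ι,
      ∑ j ∈ Splus.filter (fun j => Finset.Icc (r j) (d j) ⊆ Finset.Icc (r k) (d k)),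
          (p j : ℝ) * s j
        ≤ c * m * ((d k - r k + 1 : ℤ) : ℝ))
    (ω : ℝ) (hω0 : 0 < ω) (hω1 : ω ≤ 1 - lam / m) :
    ∃ S : Finset ι,
      (ω / c) * W ≤ ∑ j ∈ S, w j ∧
      ∀ k : ι,
        ∑ j ∈ S.filter (fun j => Finset.Icc (r j) (d j) ⊆ Finset.Icc (r k) (d k)),
            (p j : ℝ) * s j
          ≤ (ω + lam / m) * m * ((d k - r k + 1 : ℤ) : ℝ) := by
  classical
  set L : ι → ℝ := fun k => ((d k - r k + 1 : ℤ) : ℝ) with hL_def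
  have hm0 : (0:ℝ) < (m:ℝ) := by
    have : (1:ℝ) ≤ (m:ℝ) := by exact_mod_cast hm
    linarith
  have hc0 : (0:ℝ) < c := lt_of_lt_of_le one_pos hc
  have hL1 : ∀ k, (1:ℝ) ≤ L k := by
    intro k
    have : (1:ℤ) ≤ d k - r k + 1 := by linarith [hrd k]
    simp only [hL_def]
    exact_mod_cast this
  have hLmono : ∀ j k : ι, Finset.Icc (r j) (d j) ⊆ Finset.Icc (r k) (d k) → L j ≤ L k := by
    intro j k h
    have hcard : (Finset.Icc (r j) (d j)).card ≤ (Finset.Icc (r k) (d k)).card :=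
      Finset.card_le_card h
    rw [Int.card_Icc, Int.card_Icc] at hcard
    have h1 : ((d j + 1 - r j).toNat : ℤ) ≤ ((d k + 1 - r k).toNat : ℤ) := by
      exact_mod_cast hcard
    rw [Int.toNat_of_nonneg (by linarith [hrd j]), Int.toNat_of_nonneg (by linarith [hrd k])]
      at h1
    simp only [hL_def]
    have : d j - r j + 1 ≤ d k - r k + 1 := by linarith
    exact_mod_cast this
  set a : ι → ℝ := fun j => (p j : ℝ) * s j with ha_def
  have ha : ∀ j, 0 < a j := by
    intro j
    refine mul_pos ?_ (hs0 j)
    exact_mod_cast Nat.lt_of_lt_of_le Nat.zero_lt_one (hp1 j)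
  have haM : ∀ j, a j ≤ lam * L j := by
    intro j
    have h1 : a j ≤ (p j : ℝ) := by
      have := mul_le_mul_of_nonneg_left (hs1 j) (by positivity : (0:ℝ) ≤ (p j : ℝ))
      simpa using this
    exact le_trans h1 (hslack j)
  set I : ι → Finset ι :=
    fun k => Splus.filter (fun j => Finset.Icc (r j) (d j) ⊆ Finset.Icc (r k) (d k))
    with hI_def
  set y : ι → ℝ := fun j => if j ∈ Splus then ω / c else 0 with hy_def
  have hρ0 : (0:ℝ) ≤ ω / c := le_of_lt (div_pos hω0 hc0)
  have hρ1 : ω / c ≤ 1 := by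
    rw [div_le_one hc0]
    have hlm : 0 < lam / m := div_pos hlam0 hm0
    linarith
  obtain ⟨S, hSw, hSnz, hScons⟩ :=
    IR_core a w I (fun k => ω * m * L k) (fun k => lam * L k) ha (fun j => le_of_lt (hw j))
      (Finset.univ.card + (univ.filter (fun j => y j ≠ 0 ∧ y j ≠ 1)).card)
      Finset.univ y
      (fun k _ => mul_nonneg (le_of_lt hlam0) (by linarith [hL1 k]))
      (fun k _ j hj => by
        have hj' := Finset.mem_filter.1 hj
        exact le_trans (haM j) (mul_le_mul_of_nonneg_left (hLmono j k hj'.2) (le_of_lt hlam0)))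
      (fun k _ l _ => by
        rcases hlamin k l with h | h | h
        · left
          intro x hx
          have hx' := Finset.mem_filter.1 hx
          exact Finset.mem_filter.2 ⟨hx'.1, hx'.2.trans h⟩
        · right; left
          intro x hx
          have hx' := Finset.mem_filter.1 hx
          exact Finset.mem_filter.2 ⟨hx'.1, hx'.2.trans h⟩
        · right; right
          rw [Finset.disjoint_left]
          intro x hx hx'
          have h1 := (Finset.mem_filter.1 hx).2
          have h2 := (Finset.mem_filter.1 hx').2
          have hne : (Finset.Icc (r x) (d x)).Nonempty := ⟨r x, Finset.mem_Icc.2 ⟨le_refl _, hrd x⟩⟩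
          obtain ⟨z, hz⟩ := hne
          exact Finset.disjoint_left.1 h (h1 hz) (h2 hz))
      (fun j => by
        simp only [hy_def]
        split <;> simp [hρ0])
      (fun j => by
        simp only [hy_def]
        split
        · exact hρ1
        · norm_num)
      (fun k _ => by
        have hcong : ∑ j ∈ I k, a j * y j = (∑ j ∈ I k, a j) * (ω / c) := by
          rw [Finset.sum_mul]
          refine Finset.sum_congr rfl fun x hx => ?_
          have hxS : x ∈ Splus := (Finset.mem_filter.1 hx).1
          simp only [hy_def, if_pos hxS]
        rw [hcong]
        have h1 : (∑ j ∈ I k, a j) * (ω / c) ≤ (c * m * L k) * (ω / c) :=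
          mul_le_mul_of_nonneg_right (hSplus k) hρ0
        have h2 : (c * m * L k) * (ω / c) = ω * m * L k := by
          field_simp
        linarith)
      rfl
  have hSsub : ∀ x ∈ S, x ∈ Splus := by
    intro x hx
    by_contra hxS
    exact hSnz x hx (by simp only [hy_def, if_neg hxS])
  refine ⟨S, ?_, ?_⟩
  · -- weight bound
    have h1 : ∑ j, w j * y j = (ω / c) * W := by
      have : ∀ j, w j * y j = if j ∈ Splus then w j * (ω / c) else 0 := by
        intro j
        simp only [hy_def]
        split <;> simp
      rw [Finset.sum_congr rfl (fun j _ => this j)]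
      rw [Finset.sum_ite_mem, Finset.univ_inter, ← Finset.sum_mul, hW]
      ring
    linarith [hSw, h1.symm.le, h1.le]
  · intro k
    have hfil : S.filter (fun j => Finset.Icc (r j) (d j) ⊆ Finset.Icc (r k) (d k)) = S ∩ I k := by
      ext x
      simp only [Finset.mem_filter, Finset.mem_inter, hI_def]
      constructor
      · rintro ⟨hxS, hx⟩
        exact ⟨hxS, hSsub x hxS, hx⟩
      · rintro ⟨hxS, _, hx⟩
        exact ⟨hxS, hx⟩
    have hbound := hScons k (Finset.mem_univ k)
    have heq : (ω + lam / m) * m * L k = ω * m * L k + lam * L k := by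
      field_simp
    calc ∑ j ∈ S.filter (fun j => Finset.Icc (r j) (d j) ⊆ Finset.Icc (r k) (d k)),
            (p j : ℝ) * s j
        = ∑ j ∈ S ∩ I k, a j := by rw [hfil]
      _ ≤ ω * m * L k + lam * L k := hbound
      _ = (ω + lam / m) * m * L k := heq.symm
end

section
/- Let (J, m) be a laminar MaxT instance with p_j ≤ λ·|χ_j| for every j ∈ J, where λ ∈ (0,1), and let ω be a real number with 0 ≤ ω ≤ 1/2 − λ·(1/2 + 1/m). If a subset S ⊆ J satisfies, for every interval χ ∈ {χ_j : j ∈ J}, Σ_{j∈S : χ_j ⊆ χ} a_j ≤ (ω + λ/m)·m·|χ|, then S is feasibly schedulable on the m hosts. -/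
open Finset

/-!
Jobs are placed greedily by increasing window length. By laminarity, every job already placed
has its window nested in or disjoint from the window `W` of the new job `j`, so the load already
in `W` is at most the area of the other jobs inside `W`, i.e. at most
`(ω + λ/m)·m·|W| - a_j ≤ (1 - λ)(m/2)|W| - a_j`. Hence fewer than `(1 - λ)|W|` slots of `W`
carry load above `m/2`, and `j`, which needs at most `λ|W|` slots, is placed on slots of load at
most `m/2`. At every slot the load then exceeds `m/2` by at most one job; giving that job a host
of its own, the others fit on the remaining `m - 1` hosts, since items of size at most `1` and
total at most `(K + 1)/2` always fit into `K` unit bins.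

For `m = 1` a job of size `a` needs slots of load at most `1 - a`; slots of load in `(0, 1/2]` are
kept rare (at most a `λ`-fraction of every union of windows) by filling occupied slots first.
-/

namespace MaxT

variable {ι : Type*}

lemma sum_filter_insert_update [DecidableEq ι] {β M : Type*} [AddCommMonoid M] {X : Finset ι}
    {a : ι} (ha : a ∉ X) (f : ι → β) (v : β) (q : β → Prop) [DecidablePred q] (g : ι → M) :
    ∑ b ∈ insert a X with q (Function.update f a v b), g b
      = (if q v then g a else 0) + ∑ b ∈ X with q (f b), g b := by
  rw [sum_filter, sum_insert ha, Function.update_self, sum_filter]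
  congr 1
  exact sum_congr rfl fun b hb => by rw [Function.update_of_ne (ne_of_mem_of_not_mem hb ha)]

lemma card_filter_lt_mul_le_sum {α : Type*} {W : Finset α} {ℓ : α → ℝ} (hℓ : ∀ t ∈ W, 0 ≤ ℓ t)
    (c : ℝ) : #(W.filter (c < ℓ ·)) * c ≤ ∑ t ∈ W, ℓ t :=
  calc #(W.filter (c < ℓ ·)) * c ≤ ∑ t ∈ W with c < ℓ t, ℓ t := by
        simpa using card_nsmul_le_sum _ ℓ c fun t ht => (mem_filter.1 ht).2.le
    _ ≤ ∑ t ∈ W, ℓ t := sum_le_sum_of_subset_of_nonneg (filter_subset _ _) fun t ht _ => hℓ t ht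

lemma exists_subset_card_eq_and_subset_or_superset {α : Type*} {s t : Finset α} (hst : s ⊆ t)
    {n : ℕ} (hn : n ≤ #t) : ∃ u ⊆ t, #u = n ∧ (u ⊆ s ∨ s ⊆ u) := by
  rcases le_total n #s with h | h
  · obtain ⟨u, hus, hu⟩ := exists_subset_card_eq h
    exact ⟨u, hus.trans hst, hu, .inl hus⟩
  · obtain ⟨u, hsu, hut, hu⟩ := exists_subsuperset_card_eq hst h hn
    exact ⟨u, hut, hu, .inr hsu⟩

section Packing

variable (s : ι → ℝ) (X : Finset ι) {K : ℕ}

def binLoad (f : ι → Fin K) (i : Fin K) : ℝ := ∑ a ∈ X with f a = i, s a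

def IsPacking (f : ι → Fin K) : Prop := ∀ i, binLoad s X f i ≤ 1

variable {s X}

lemma IsPacking.insert [DecidableEq ι] {f : ι → Fin K} (hf : IsPacking s X f) {a : ι} (ha : a ∉ X)
    {i : Fin K} (hi : binLoad s X f i + s a ≤ 1) :
    IsPacking s (insert a X) (Function.update f a i) := by
  intro i'
  unfold binLoad
  rw [sum_filter_insert_update ha f i (· = i')]
  split_ifs with h
  · exact h ▸ (add_comm (s a) _ ▸ hi)
  · simpa [binLoad] using hf i'

lemma binLoad_castSucc (f : ι → Fin K) (i : Fin K) :
    binLoad s X (Fin.castSucc ∘ f) i.castSucc = binLoad s X f i := by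
  simp [binLoad]

lemma binLoad_castSucc_last (f : ι → Fin K) : binLoad s X (Fin.castSucc ∘ f) (Fin.last K) = 0 := by
  simp [binLoad, Fin.castSucc_ne_last]

lemma IsPacking.castSucc {f : ι → Fin K} (hf : IsPacking s X f) :
    IsPacking s X (Fin.castSucc ∘ f) := by
  intro i
  induction i using Fin.lastCases with
  | last => simp [binLoad_castSucc_last]
  | cast i => exact (binLoad_castSucc f i).symm ▸ hf i

/-- If no bin had room, every bin would be fuller than `1 - s a ≥ 1/2`. -/
lemma exists_binLoad_add_le_one (hK : 1 ≤ K) (f : ι → Fin K) {a : ι} (ha : s a ≤ 1 / 2)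
    (hsum : ∑ b ∈ X, s b + s a ≤ (K + 1) / 2) : ∃ i, binLoad s X f i + s a ≤ 1 := by
  by_contra! h
  have hlt : (K : ℝ) * (1 - s a) < ∑ b ∈ X, s b :=
    calc (K : ℝ) * (1 - s a) = ∑ _i : Fin K, (1 - s a) := by simp [mul_sub]
      _ < ∑ i, binLoad s X f i :=
        sum_lt_sum_of_nonempty (univ_nonempty_iff.2 ⟨⟨0, hK⟩⟩) fun i _ => by linarith [h i]
      _ = ∑ b ∈ X, s b := sum_fiberwise X f s
  have hK' : (1 : ℝ) ≤ K := by exact_mod_cast hK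
  nlinarith

lemma exists_binLoad_eq_zero (hX : #X < K) (f : ι → Fin K) : ∃ i, binLoad s X f i = 0 := by
  obtain ⟨i, -, hi⟩ := exists_mem_notMem_of_card_lt_card (s := X.image f) (t := univ)
    (by simpa using card_image_le.trans_lt hX)
  refine ⟨i, sum_eq_zero fun b hb => ?_⟩
  obtain ⟨hbX, rfl⟩ := mem_filter.1 hb
  exact absurd (mem_image_of_mem f hbX) hi

/-- Items are inserted by decreasing size: an item larger than `1/2` finds an empty bin, since
all earlier items are larger than `1/2` too; a smaller one is placed by first fit. -/
theorem exists_isPacking_of_sum_le [DecidableEq ι] (hK : 1 ≤ K) (hs0 : ∀ a ∈ X, 0 ≤ s a)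
    (hs1 : ∀ a ∈ X, s a ≤ 1) (hsum : ∑ a ∈ X, s a ≤ (K + 1) / 2) :
    ∃ f : ι → Fin K, IsPacking s X f := by
  induction X using Finset.induction_on_min_value s with
  | empty => exact ⟨fun _ => ⟨0, hK⟩, fun i => by simp [binLoad]⟩
  | insert a X ha hmin ih =>
    rw [sum_insert ha] at hsum
    have hsa := hs1 a (mem_insert_self a X)
    obtain ⟨f, hf⟩ := ih (fun b hb => hs0 b (mem_insert_of_mem hb))
      (fun b hb => hs1 b (mem_insert_of_mem hb)) (by linarith [hs0 a (mem_insert_self a X)])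
    suffices ∃ i, binLoad s X f i + s a ≤ 1 from
      let ⟨_, hi⟩ := this; ⟨_, hf.insert ha hi⟩
    by_cases hsmall : s a ≤ 1 / 2
    · exact exists_binLoad_add_le_one hK f hsmall (by linarith)
    · have hcard : #X < K := by
        have h := card_nsmul_le_sum X s (1 / 2) fun b hb => by linarith [hmin b hb]
        rw [nsmul_eq_mul] at h
        exact_mod_cast (show (#X : ℝ) < K by linarith)
      obtain ⟨i, hi⟩ := exists_binLoad_eq_zero hcard f
      exact ⟨i, by linarith⟩

theorem exists_isPacking_of_sum_sub_le [DecidableEq ι] (hK : 2 ≤ K) (hs0 : ∀ a ∈ X, 0 ≤ s a)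
    (hs1 : ∀ a ∈ X, s a ≤ 1) {x : ι} (hx : x ∈ X) (hsum : ∑ a ∈ X, s a - s x ≤ K / 2) :
    ∃ f : ι → Fin K, IsPacking s X f := by
  obtain ⟨n, rfl⟩ : ∃ n, K = n + 1 := ⟨K - 1, by omega⟩
  obtain ⟨f, hf⟩ := exists_isPacking_of_sum_le (K := n) (X := X.erase x) (by omega)
    (fun a ha => hs0 a (mem_of_mem_erase ha)) (fun a ha => hs1 a (mem_of_mem_erase ha))
    (by rw [← sum_erase_add X s hx] at hsum; push_cast at hsum; linarith)
  have hlast : binLoad s (X.erase x) (Fin.castSucc ∘ f) (Fin.last n) + s x ≤ 1 := by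
    rw [binLoad_castSucc_last, zero_add]
    exact hs1 x hx
  exact ⟨_, insert_erase hx ▸ hf.castSucc.insert (notMem_erase x X) hlast⟩

end Packing

section Counting

variable {α : Type*} {W : Finset α} {ℓ : α → ℝ}

lemma le_card_filter_le_of_sum_le (hℓ : ∀ t ∈ W, 0 ≤ ℓ t) {lam β : ℝ} (hβ : 0 < β) {n : ℕ}
    (hsum : ∑ t ∈ W, ℓ t ≤ (1 - lam) * β * #W) (hn : (n : ℝ) ≤ lam * #W) :
    n ≤ #(W.filter (ℓ · ≤ β)) := by
  have hsplit : (#(W.filter (ℓ · ≤ β)) : ℝ) + #(W.filter (β < ℓ ·)) = #W := by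
    exact_mod_cast (by simpa only [not_le] using card_filter_add_card_filter_not (s := W) (ℓ · ≤ β))
  have hB : (#(W.filter (β < ℓ ·)) : ℝ) ≤ (1 - lam) * #W :=
    le_of_mul_le_mul_right (by linarith [card_filter_lt_mul_le_sum hℓ β]) hβ
  exact_mod_cast (show (n : ℝ) ≤ #(W.filter (ℓ · ≤ β)) by linarith)

noncomputable def lightSlots (ℓ : α → ℝ) (I : Finset α) : Finset α :=
  I.filter fun t => 0 < ℓ t ∧ ℓ t ≤ 1 / 2

/-- A slot that cannot take an item of size `a` is either heavy (load above `1/2`, counted by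
mass) or, when `a > 1/2`, light (counted by `hlight`). -/
lemma le_card_filter_add_le_one [DecidableEq α] (hℓ : ∀ t ∈ W, 0 ≤ ℓ t) {a lam : ℝ} {n : ℕ}
    (ha0 : 0 ≤ a) (ha1 : a ≤ 1)
    (hsum : ∑ t ∈ W, ℓ t + n * a ≤ (1 - lam) / 2 * #W) (hn : (n : ℝ) ≤ lam * #W)
    (hlight : (#(lightSlots ℓ W) : ℝ) ≤ lam * #W) :
    n ≤ #(W.filter (ℓ · + a ≤ 1)) := by
  set B := W.filter fun t => ¬ℓ t + a ≤ 1
  set H := W.filter (1 / 2 < ℓ ·)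
  have hsplit : (#(W.filter (ℓ · + a ≤ 1)) : ℝ) + #B = #W := by
    exact_mod_cast card_filter_add_card_filter_not (s := W) _
  have hH := card_filter_lt_mul_le_sum hℓ (1 / 2)
  have hna : 0 ≤ (n : ℝ) * a := mul_nonneg n.cast_nonneg ha0
  by_cases ha : a ≤ 1 / 2
  · have hBH : (#B : ℝ) ≤ #H := by
      refine Nat.cast_le.2 (card_le_card fun t ht => ?_)
      simp only [B, H, mem_filter] at ht ⊢
      exact ⟨ht.1, by linarith⟩
    exact_mod_cast (show (n : ℝ) ≤ #(W.filter (ℓ · + a ≤ 1)) by linarith)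
  · have hBHL : (#B : ℝ) ≤ #H + #(lightSlots ℓ W) := by
      refine Nat.cast_le.2 ((card_le_card fun t ht => ?_).trans (card_union_le _ _)) |>.trans_eq
        (Nat.cast_add _ _)
      simp only [B, H, lightSlots, mem_filter, mem_union] at ht ⊢
      by_cases h : 1 / 2 < ℓ t
      · exact .inl ⟨ht.1, h⟩
      · exact .inr ⟨ht.1, by linarith, by linarith⟩
    have : (n : ℝ) * (1 / 2) ≤ n * a := by gcongr; linarith
    exact_mod_cast (show (n : ℝ) ≤ #(W.filter (ℓ · + a ≤ 1)) by linarith)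

/-- Occupied slots are preferred, so that new light slots are opened only when every light slot
of `W` is filled; there are then at most `n` light slots in `W`. -/
lemma exists_subset_card_lightSlots_le [DecidableEq α] (hℓ : ∀ t ∈ W, 0 ≤ ℓ t) {a lam : ℝ}
    {n : ℕ} (ha0 : 0 ≤ a) (ha1 : a ≤ 1) (hsum : ∑ t ∈ W, ℓ t + n * a ≤ (1 - lam) / 2 * #W)
    (hn : (n : ℝ) ≤ lam * #W) (hlight : (#(lightSlots ℓ W) : ℝ) ≤ lam * #W) :
    ∃ A ⊆ W, #A = n ∧ (∀ t ∈ A, ℓ t + a ≤ 1) ∧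
      (#(lightSlots (fun t => ℓ t + if t ∈ A then a else 0) W) : ℝ) ≤ lam * #W := by
  set E := W.filter (ℓ · + a ≤ 1)
  obtain ⟨A, hAE, hA, hAE1⟩ := exists_subset_card_eq_and_subset_or_superset
    (filter_subset (0 < ℓ ·) E) (le_card_filter_add_le_one hℓ ha0 ha1 hsum hn hlight)
  refine ⟨A, hAE.trans (filter_subset _ _), hA, fun t ht => (mem_filter.1 (hAE ht)).2, ?_⟩
  by_cases hopen : a ≤ 1 / 2 ∧ E.filter (0 < ℓ ·) ⊆ A
  · have hsub : lightSlots (fun t => ℓ t + if t ∈ A then a else 0) W ⊆ A := fun t ht => by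
      by_contra htA
      simp only [lightSlots, mem_filter, if_neg htA, add_zero] at ht
      exact htA (hopen.2 (mem_filter.2 ⟨mem_filter.2 ⟨ht.1, by linarith⟩, ht.2.1⟩))
    exact (Nat.cast_le.2 (card_le_card hsub)).trans (hA ▸ hn)
  · have hsub : lightSlots (fun t => ℓ t + if t ∈ A then a else 0) W ⊆ lightSlots ℓ W :=
      fun t ht => by
      simp only [lightSlots, mem_filter] at ht ⊢
      refine ⟨ht.1, ?_⟩
      split_ifs at ht with htA
      · have hAE1' : A ⊆ E.filter (0 < ℓ ·) := hAE1.resolve_right fun h =>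
          hopen ⟨by linarith [hℓ t ht.1], h⟩
        exact ⟨(mem_filter.1 (hAE1' htA)).2, by linarith⟩
      · simpa using ht.2
    exact (Nat.cast_le.2 (card_le_card hsub)).trans hlight

lemma card_lightSlots_le_of_subset_or_disjoint [DecidableEq α] {ℓ' : α → ℝ} {lam : ℝ}
    {I : Finset α} (h : ∀ t ∉ W, ℓ' t = ℓ t) (hWI : W ⊆ I ∨ Disjoint W I)
    (hout : (#(lightSlots ℓ (I \ W)) : ℝ) ≤ lam * #(I \ W))
    (hin : (#(lightSlots ℓ' W) : ℝ) ≤ lam * #W) :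
    (#(lightSlots ℓ' I) : ℝ) ≤ lam * #I := by
  have hsub : lightSlots ℓ' I ⊆ lightSlots ℓ (I \ W) ∪ lightSlots ℓ' (I ∩ W) := fun t ht => by
    simp only [lightSlots, mem_filter, mem_union, mem_sdiff, mem_inter] at ht ⊢
    by_cases htW : t ∈ W
    · exact .inr ⟨⟨ht.1, htW⟩, ht.2⟩
    · exact .inl ⟨⟨ht.1, htW⟩, h t htW ▸ ht.2⟩
  have hinter : (#(lightSlots ℓ' (I ∩ W)) : ℝ) ≤ lam * #(I ∩ W) := by
    rcases hWI with hWI | hWI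
    · rwa [inter_eq_right.2 hWI]
    · simp [disjoint_iff_inter_eq_empty.1 hWI.symm, lightSlots]
  have hcard : (#(I \ W) : ℝ) + #(I ∩ W) = #I := by exact_mod_cast card_sdiff_add_card_inter I W
  calc (#(lightSlots ℓ' I) : ℝ) ≤ #(lightSlots ℓ (I \ W)) + #(lightSlots ℓ' (I ∩ W)) := by
        exact_mod_cast (card_le_card hsub).trans (card_union_le _ _)
    _ ≤ lam * #I := by rw [← hcard, mul_add]; linarith

lemma subset_or_disjoint_sdiff [DecidableEq α] {J W I : Finset α} (hW : J ⊆ W ∨ Disjoint J W)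
    (hI : J ⊆ I ∨ Disjoint J I) : J ⊆ I \ W ∨ Disjoint J (I \ W) := by
  rcases hW with hW | hW
  · exact .inr (disjoint_sdiff.mono_left hW)
  · rcases hI with hI | hI
    · exact .inl (subset_sdiff.2 ⟨hI, hW⟩)
    · exact .inr (hI.mono_right sdiff_subset)

end Counting

section Slots

variable (r d : ι → ℤ) (p : ι → ℕ) (s : ι → ℝ)

def IsSlotAssignment (P : Finset ι) (T : ι → Finset ℤ) : Prop :=
  ∀ k ∈ P, T k ⊆ Icc (r k) (d k) ∧ #(T k) = p k

def slotLoad (P : Finset ι) (T : ι → Finset ℤ) (t : ℤ) : ℝ := ∑ k ∈ P with t ∈ T k, s k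

variable {r d p s}

lemma slotLoad_nonneg {P : Finset ι} (hs : ∀ k ∈ P, 0 ≤ s k) (T : ι → Finset ℤ) (t : ℤ) :
    0 ≤ slotLoad s P T t :=
  sum_nonneg fun k hk => hs k (mem_filter.1 hk).1

lemma schedulable_of_isPacking {m : ℕ} {S : Finset ι} {T : ι → Finset ℤ}
    (hT : IsSlotAssignment r d p S T)
    (hpack : ∀ t, ∃ f : ι → Fin m, IsPacking s (S.filter (t ∈ T ·)) f) :
    Schedulable m r d p s S := by
  choose f hf using hpack
  exact ⟨T, fun j t => f t j, hT, fun i t => by simpa only [binLoad, filter_filter] using hf t i⟩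

lemma slotLoad_insert_update [DecidableEq ι] {P : Finset ι} {j : ι} (hj : j ∉ P)
    (T : ι → Finset ℤ) (A : Finset ℤ) (t : ℤ) :
    slotLoad s (insert j P) (Function.update T j A) t
      = slotLoad s P T t + if t ∈ A then s j else 0 := by
  rw [slotLoad, sum_filter_insert_update hj T A (t ∈ ·), add_comm, slotLoad]

/-- Double counting: a job whose window is disjoint from `W` puts no load on `W`, and one whose
window lies in `W` puts load `s k` on `p k` of its slots. -/
lemma sum_slotLoad_le {P : Finset ι} {T : ι → Finset ℤ} (hs : ∀ k ∈ P, 0 ≤ s k)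
    (hT : IsSlotAssignment r d p P T) {W : Finset ℤ}
    (hW : ∀ k ∈ P, Icc (r k) (d k) ⊆ W ∨ Disjoint (Icc (r k) (d k)) W) :
    ∑ t ∈ W, slotLoad s P T t ≤ ∑ k ∈ P with Icc (r k) (d k) ⊆ W, p k * s k := by
  calc ∑ t ∈ W, slotLoad s P T t = ∑ k ∈ P, #(W ∩ T k) * s k := by
        simp only [slotLoad, sum_filter]
        rw [sum_comm]
        simp
    _ ≤ ∑ k ∈ P, if Icc (r k) (d k) ⊆ W then p k * s k else 0 := by
        refine sum_le_sum fun k hk => ?_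
        split_ifs with hkW
        · gcongr
          · exact hs k hk
          · exact (hT k hk).2 ▸ card_le_card inter_subset_right
        · have hdisj : Disjoint W (T k) :=
            ((hW k hk).resolve_left hkW).symm.mono_right (hT k hk).1
          simp [disjoint_iff_inter_eq_empty.1 hdisj]
    _ = _ := (sum_filter _ _).symm

lemma sum_slotLoad_add_le [DecidableEq ι] {S P : Finset ι} {T : ι → Finset ℤ} {j : ι}
    (hs : ∀ k ∈ S, 0 ≤ s k) (hPS : insert j P ⊆ S) (hj : j ∉ P)
    (hT : IsSlotAssignment r d p P T)
    (hnest : ∀ k ∈ P, Icc (r k) (d k) ⊆ Icc (r j) (d j) ∨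
      Disjoint (Icc (r k) (d k)) (Icc (r j) (d j))) :
    ∑ t ∈ Icc (r j) (d j), slotLoad s P T t + p j * s j
      ≤ ∑ k ∈ S with Icc (r k) (d k) ⊆ Icc (r j) (d j), p k * s k := by
  have hsP : ∀ k ∈ P, 0 ≤ s k := fun k hk => hs k (hPS (mem_insert_of_mem hk))
  calc ∑ t ∈ Icc (r j) (d j), slotLoad s P T t + p j * s j
      ≤ ∑ k ∈ P with Icc (r k) (d k) ⊆ Icc (r j) (d j), p k * s k + p j * s j := by
        gcongr
        exact sum_slotLoad_le hsP hT hnest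
    _ = ∑ k ∈ insert j P with Icc (r k) (d k) ⊆ Icc (r j) (d j), p k * s k := by
        rw [filter_insert, if_pos subset_rfl, sum_insert (by simp [hj]), add_comm]
    _ ≤ _ := sum_le_sum_of_subset_of_nonneg (filter_subset_filter _ hPS) fun k hk _ =>
        mul_nonneg (Nat.cast_nonneg _) (hs k (mem_filter.1 hk).1)

lemma _root_.LaminarWindows.subset_or_disjoint (h : LaminarWindows r d) {j k : ι}
    (hjk : d k - r k ≤ d j - r j) :
    Icc (r k) (d k) ⊆ Icc (r j) (d j) ∨ Disjoint (Icc (r k) (d k)) (Icc (r j) (d j)) := by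
  rcases h k j with h | h | h
  · exact .inl h
  · refine .inl (eq_of_subset_of_card_le h ?_).ge
    simp only [Int.card_Icc]
    omega
  · exact .inr h

/-- Jobs are added by increasing window length, so that all jobs already placed have windows
nested in or disjoint from the window of the new job. -/
theorem exists_isSlotAssignment_of_step [DecidableEq ι] (hlam : LaminarWindows r d)
    (S : Finset ι) (Inv : Finset ι → (ι → Finset ℤ) → Prop) (h0 : Inv ∅ fun _ => ∅)
    (step : ∀ P T j, insert j P ⊆ S → j ∉ P →
      (∀ k ∈ P, Icc (r k) (d k) ⊆ Icc (r j) (d j) ∨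
        Disjoint (Icc (r k) (d k)) (Icc (r j) (d j))) →
      IsSlotAssignment r d p P T → Inv P T →
      ∃ A ⊆ Icc (r j) (d j), #A = p j ∧ Inv (insert j P) (Function.update T j A)) :
    ∃ T, IsSlotAssignment r d p S T ∧ Inv S T := by
  suffices ∀ P ⊆ S, ∃ T, IsSlotAssignment r d p P T ∧ Inv P T from this S subset_rfl
  intro P
  induction P using Finset.induction_on_max_value (fun k => d k - r k) with
  | empty => exact fun _ => ⟨fun _ => ∅, by simp [IsSlotAssignment], h0⟩
  | insert j P hj hmax ih =>
    intro hPS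
    obtain ⟨T, hT, hInv⟩ := ih ((subset_insert j P).trans hPS)
    obtain ⟨A, hAW, hA, hInv'⟩ :=
      step P T j hPS hj (fun k hk => hlam.subset_or_disjoint (hmax k hk)) hT hInv
    refine ⟨_, fun k hk => ?_, hInv'⟩
    rcases eq_or_ne k j with rfl | hkj
    · simpa using ⟨hAW, hA⟩
    · rw [Function.update_of_ne hkj]
      exact hT k ((mem_insert.1 hk).resolve_left hkj)

section Greedy

variable [DecidableEq ι] (hlam : LaminarWindows r d) (S : Finset ι) {lam C : ℝ}
  (hS : ∀ k ∈ S, ∑ j ∈ S with Icc (r j) (d j) ⊆ Icc (r k) (d k), p j * s j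
    ≤ C * #(Icc (r k) (d k)))
  (hp : ∀ k ∈ S, (p k : ℝ) ≤ lam * #(Icc (r k) (d k)))
include hlam hS hp

/-- Each new job goes to slots of load at most `β`, so at every slot the load exceeds `β` by at
most the size of the last job placed there. -/
theorem exists_isSlotAssignment_slotLoad_le_or_sub_le (hs : ∀ k ∈ S, 0 ≤ s k) {β : ℝ}
    (hβ : 0 < β) (hC : C ≤ (1 - lam) * β) :
    ∃ T, IsSlotAssignment r d p S T ∧
      ∀ t, slotLoad s S T t ≤ β ∨ ∃ k ∈ S, t ∈ T k ∧ slotLoad s S T t - s k ≤ β := by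
  refine exists_isSlotAssignment_of_step hlam S
    (fun P T => ∀ t, slotLoad s P T t ≤ β ∨ ∃ k ∈ P, t ∈ T k ∧ slotLoad s P T t - s k ≤ β)
    (fun t => .inl (by simp [slotLoad, hβ.le])) fun P T j hPS hj hnest hT hInv => ?_
  have hjS := hPS (mem_insert_self j P)
  have hmass := (sum_slotLoad_add_le hs hPS hj hT hnest).trans (hS j hjS)
  have hfree : p j ≤ #((Icc (r j) (d j)).filter (slotLoad s P T · ≤ β)) := by
    refine le_card_filter_le_of_sum_le
      (fun t _ => slotLoad_nonneg (fun k hk => hs k (hPS (mem_insert_of_mem hk))) T t) hβ ?_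
      (hp j hjS)
    have := mul_le_mul_of_nonneg_right hC (#(Icc (r j) (d j))).cast_nonneg
    have := mul_nonneg (p j).cast_nonneg (hs j hjS)
    linarith
  obtain ⟨A, hA, hAcard⟩ := exists_subset_card_eq hfree
  refine ⟨A, hA.trans (filter_subset _ _), hAcard, fun t => ?_⟩
  rw [slotLoad_insert_update hj]
  split_ifs with ht
  · exact .inr ⟨j, mem_insert_self j P, by simp [ht], by linarith [(mem_filter.1 (hA ht)).2]⟩
  · rcases hInv t with h | ⟨k, hk, htk, h⟩
    · exact .inl (by simpa using h)
    · refine .inr ⟨k, mem_insert_of_mem hk, ?_, by simpa using h⟩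
      rwa [Function.update_of_ne (ne_of_mem_of_not_mem hk hj)]

/-- The invariant bounds the number of light slots (load in `(0, 1/2]`) in every union of
windows; it lets a job of size above `1/2` find room. -/
theorem exists_isSlotAssignment_slotLoad_le_one (hs0 : ∀ k ∈ S, 0 ≤ s k)
    (hs1 : ∀ k ∈ S, s k ≤ 1) (hlam0 : 0 ≤ lam) (hC : C ≤ (1 - lam) / 2) :
    ∃ T, IsSlotAssignment r d p S T ∧ ∀ t, slotLoad s S T t ≤ 1 := by
  refine (exists_isSlotAssignment_of_step hlam S
    (fun P T => (∀ t, slotLoad s P T t ≤ 1) ∧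
      ∀ I : Finset ℤ, (∀ k ∈ P, Icc (r k) (d k) ⊆ I ∨ Disjoint (Icc (r k) (d k)) I) →
        (#(lightSlots (slotLoad s P T) I) : ℝ) ≤ lam * #I)
    ⟨fun t => by simp [slotLoad], fun I _ => by simp [slotLoad, lightSlots]; positivity⟩
    fun P T j hPS hj hnest hT hInv => ?_).imp fun _ hT => ⟨hT.1, hT.2.1⟩
  set W := Icc (r j) (d j)
  have hjS := hPS (mem_insert_self j P)
  have hmass := (sum_slotLoad_add_le hs0 hPS hj hT hnest).trans (hS j hjS)
  obtain ⟨A, hAW, hA, hfit, hlightW⟩ := exists_subset_card_lightSlots_le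
    (fun t _ => slotLoad_nonneg (fun k hk => hs0 k (hPS (mem_insert_of_mem hk))) T t)
    (hs0 j hjS) (hs1 j hjS)
    (by nlinarith [mul_le_mul_of_nonneg_right hC (#W).cast_nonneg]) (hp j hjS) (hInv.2 W hnest)
  have hload : slotLoad s (insert j P) (Function.update T j A)
      = fun t => slotLoad s P T t + if t ∈ A then s j else 0 :=
    funext (slotLoad_insert_update hj T A)
  refine ⟨A, hAW, hA, fun t => ?_, fun I hI => ?_⟩
  · rw [slotLoad_insert_update hj]
    split_ifs with ht
    · exact hfit t ht
    · simpa using hInv.1 t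
  · rw [hload]
    refine card_lightSlots_le_of_subset_or_disjoint
      (fun t ht => by simp only [if_neg fun h => ht (hAW h), add_zero]) (hI j (mem_insert_self j P))
      (hInv.2 (I \ W) fun k hk =>
        subset_or_disjoint_sdiff (hnest k hk) (hI k (mem_insert_of_mem hk)))
      hlightW

end Greedy

end Slots

end MaxT

open MaxT

theorem stmt_2_general {ι : Type*}
    (m : ℕ) (hm : 1 ≤ m)
    (r d : ι → ℤ) (p : ι → ℕ) (s : ι → ℝ)
    (hrd : ∀ j, r j ≤ d j)
    (hs0 : ∀ j, 0 < s j) (hs1 : ∀ j, s j ≤ 1)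
    (hlamin : LaminarWindows r d)
    (lam : ℝ) (hlam0 : 0 < lam)
    (hslack : ∀ j, (p j : ℝ) ≤ lam * ((d j - r j + 1 : ℤ) : ℝ))
    (ω : ℝ) (hω1 : ω ≤ 1/2 - lam * (1/2 + 1/m))
    (S : Finset ι)
    (hS : ∀ k : ι,
      ∑ j ∈ S.filter (fun j => Finset.Icc (r j) (d j) ⊆ Finset.Icc (r k) (d k)),
          (p j : ℝ) * s j
        ≤ (ω + lam / m) * m * ((d k - r k + 1 : ℤ) : ℝ)) :
    Schedulable m r d p s S := by
  classical
  have hcard : ∀ k, ((d k - r k + 1 : ℤ) : ℝ) = #(Icc (r k) (d k)) := fun k => by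
    rw [show d k - r k + 1 = d k + 1 - r k by ring, ← Int.card_Icc_of_le _ _ (by linarith [hrd k])]
    norm_cast
  have hC : (ω + lam / m) * m ≤ (1 - lam) * (m / 2) := by
    have hm' : (0 : ℝ) < m := by exact_mod_cast hm
    have := mul_le_mul_of_nonneg_right hω1 hm'.le
    field_simp at this ⊢
    linarith
  have hS' := fun k (_ : k ∈ S) => hcard k ▸ hS k
  have hp := fun k (_ : k ∈ S) => hcard k ▸ hslack k
  have hs0' : ∀ k ∈ S, 0 ≤ s k := fun k _ => (hs0 k).le
  rcases Nat.lt_or_ge m 2 with hm1 | hm2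
  · obtain rfl : m = 1 := by omega
    obtain ⟨T, hT, hload⟩ := exists_isSlotAssignment_slotLoad_le_one hlamin S hS' hp hs0'
      (fun k _ => hs1 k) hlam0.le (by norm_num at hC ⊢; linarith)
    exact schedulable_of_isPacking hT fun t => exists_isPacking_of_sum_le le_rfl
      (fun k hk => hs0' k (mem_filter.1 hk).1) (fun k _ => hs1 k) ((hload t).trans (by norm_num))
  · obtain ⟨T, hT, hload⟩ := exists_isSlotAssignment_slotLoad_le_or_sub_le hlamin S hS' hp hs0'
      (by positivity) hC
    refine schedulable_of_isPacking hT fun t => ?_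
    have hX0 : ∀ k ∈ S.filter (t ∈ T ·), 0 ≤ s k := fun k hk => hs0' k (mem_filter.1 hk).1
    rcases hload t with h | ⟨k, hk, htk, h⟩
    · exact exists_isPacking_of_sum_le (by omega) hX0 (fun k _ => hs1 k) (h.trans (by linarith))
    · exact exists_isPacking_of_sum_sub_le hm2 hX0 (fun k _ => hs1 k) (mem_filter.2 ⟨hk, htk⟩) h

theorem stmt_2 {ι : Type*} [Fintype ι]
    (m : ℕ) (hm : 1 ≤ m)
    (r d : ι → ℤ) (p : ι → ℕ) (s : ι → ℝ)
    (hrd : ∀ j, r j ≤ d j)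
    (hp1 : ∀ j, 1 ≤ p j)
    (hpw : ∀ j, (p j : ℤ) ≤ d j - r j + 1)
    (hs0 : ∀ j, 0 < s j) (hs1 : ∀ j, s j ≤ 1)
    (hlamin : LaminarWindows r d)
    (lam : ℝ) (hlam0 : 0 < lam) (hlam1 : lam < 1)
    (hslack : ∀ j, (p j : ℝ) ≤ lam * ((d j - r j + 1 : ℤ) : ℝ))
    (ω : ℝ) (hω0 : 0 ≤ ω) (hω1 : ω ≤ 1/2 - lam * (1/2 + 1/m))
    (S : Finset ι)
    (hS : ∀ k : ι,
      ∑ j ∈ S.filter (fun j => Finset.Icc (r j) (d j) ⊆ Finset.Icc (r k) (d k)),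
          (p j : ℝ) * s j
        ≤ (ω + lam / m) * m * ((d k - r k + 1 : ℤ) : ℝ)) :
    Schedulable m r d p s S :=
  stmt_2_general m hm r d p s hrd hs0 hs1 hlamin lam hlam0 hslack ω hω1 S hS
end

section
/- Let (J, m) be a laminar MaxT instance with p_j ≤ λ·|χ_j| for every j ∈ J, where λ ∈ (0, 1 − 2/(m+2)), set ω = 1/2 − λ·(1/2 + 1/m) (so ω > 0), and let W denote the maximum of Σ_{j∈S} w_j over all feasibly schedulable subsets S ⊆ J. Then: (i) every subset S ⊆ J satisfying Σ_{j∈S : χ_j ⊆ χ} a_j ≤ (ω + λ/m)·m·|χ| for every χ ∈ {χ_j : j ∈ J} is feasibly schedulable on the m hosts; and (ii) there exists such a subset S with Σ_{j∈S} w_j ≥ ω·W. In particular, there is a feasibly schedulable subset of weight at least (1/2 − λ·(1/2 + 1/m))·W that moreover satisfies the above per-window area constraints. -/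
open Finset

/-!
Part (i). Insert the jobs by nondecreasing window length; by laminarity each new window then
contains or misses every earlier one. Call a cell (host, slot) open if its load lies strictly
between `0` and `1/2`. The invariant is that every slot has at most one open cell and every set
`I` that each window contains or misses holds at most `λ |I|` open cells. Since the area budget
per window is `(ω + λ/m) m = (1 - λ) m / 2` and `p j ≤ λ |χ j|`, counting load shows that at
least `p j` slots of `χ j` have a cell with room for `j`. A job of size `≥ 1/2` opens no cell;
a smaller one is put into open cells first, and otherwise opens at most `p j ≤ λ |χ j|` cells.

Part (ii). In an optimal schedule every window `χ` carries area at most `m |χ|`. Scan its jobs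
by nonincreasing density `w j / a j`, keeping a job when all budgets `(ω m + λ) |χ|` stay
satisfied. A rejected job lies in a window whose kept area exceeds `ω m |χ|`; the maximal such
windows are disjoint, so on every prefix of the scan the kept area is at least `ω` times the
scanned area, and Abel summation turns this into the same bound for the weights.
-/

namespace MaxT

open Function

variable {ι α : Type*}

def IsLaminar (χ : ι → Finset α) : Prop :=
  ∀ j k, χ j ⊆ χ k ∨ χ k ⊆ χ j ∨ Disjoint (χ j) (χ k)

theorem pairwiseDisjoint_maximal {P : Finset α → Prop}
    (hP : ∀ u v, P u → P v → u ⊆ v ∨ v ⊆ u ∨ Disjoint u v) :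
    {u | Maximal P u}.PairwiseDisjoint id := by
  intro u hu v hv huv
  rcases hP u v hu.1 hv.1 with h | h | h
  · exact absurd (le_antisymm h (hu.2 hv.1 h)) huv
  · exact absurd (le_antisymm (hv.2 hu.1 h) h) huv
  · exact h

theorem exists_subset_card_eq_and_subset_or_superset_s3 {A F : Finset α} {n : ℕ} (hAF : A ⊆ F)
    (hn : n ≤ #F) : ∃ C ⊆ F, #C = n ∧ (C ⊆ A ∨ A ⊆ C) := by
  rcases le_or_gt n #A with h | h
  · obtain ⟨C, hC, hcard⟩ := Finset.exists_subset_card_eq h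
    exact ⟨C, hC.trans hAF, hcard, Or.inl hC⟩
  · obtain ⟨C, hAC, hCF, hcard⟩ := Finset.exists_subsuperset_card_eq hAF h.le hn
    exact ⟨C, hCF, hcard, Or.inr hAC⟩

variable [DecidableEq α]

def area (χ : ι → Finset α) (a : ι → ℝ) (S : Finset ι) (v : Finset α) : ℝ :=
  ∑ j ∈ S with χ j ⊆ v, a j

section Area

variable {χ : ι → Finset α} {a : ι → ℝ} {S S' : Finset ι} {v : Finset α}

theorem area_mono (ha : ∀ j, 0 ≤ a j) (h : S ⊆ S') : area χ a S v ≤ area χ a S' v :=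
  Finset.sum_le_sum_of_subset_of_nonneg (Finset.filter_subset_filter _ h) fun j _ _ => ha j

theorem area_insert_of_subset [DecidableEq ι] {j : ι} (hj : j ∉ S) (h : χ j ⊆ v) :
    area χ a (insert j S) v = a j + area χ a S v := by
  rw [area, Finset.filter_insert, if_pos h, Finset.sum_insert (by simp [hj]), area]

theorem area_insert_of_not_subset [DecidableEq ι] {j : ι} (h : ¬χ j ⊆ v) :
    area χ a (insert j S) v = area χ a S v := by
  rw [area, Finset.filter_insert, if_neg h, area]

theorem area_sdiff_add [DecidableEq ι] (h : S ⊆ S') :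
    area χ a (S' \ S) v + area χ a S v = area χ a S' v := by
  simp only [area, Finset.sum_filter]
  exact Finset.sum_sdiff h

/-- A job with a nonempty window lies below at most one set of a disjoint family. -/
theorem sum_area_eq_of_pairwiseDisjoint {V : Finset (Finset α)}
    (hV : (V : Set (Finset α)).PairwiseDisjoint id) (hne : ∀ j, (χ j).Nonempty) :
    ∑ u ∈ V, area χ a S u = ∑ j ∈ S with ∃ u ∈ V, χ j ⊆ u, a j := by
  classical
  simp only [area]
  rw [← Finset.sum_biUnion]
  · congr 1
    ext j
    simp only [Finset.mem_biUnion, Finset.mem_filter]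
    tauto
  · intro u hu w hw huw
    refine Finset.disjoint_filter.2 fun j _ hju hjw => ?_
    obtain ⟨t, ht⟩ := hne j
    exact Finset.disjoint_left.1 (hV hu hw huw) (hju ht) (hjw ht)

end Area

section Schedule

variable {m : ℕ}

def load (s : ι → ℝ) (S : Finset ι) (T : ι → Finset α) (H : ι → α → Fin m) (i : Fin m)
    (t : α) : ℝ :=
  ∑ j ∈ S with t ∈ T j ∧ H j t = i, s j

noncomputable def openCells (s : ι → ℝ) (S : Finset ι) (T : ι → Finset α) (H : ι → α → Fin m)
    (t : α) : Finset (Fin m) :=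
  {i | 0 < load s S T H i t ∧ load s S T H i t < 1 / 2}

noncomputable def openCount (s : ι → ℝ) (S : Finset ι) (T : ι → Finset α) (H : ι → α → Fin m)
    (I : Finset α) : ℕ :=
  ∑ t ∈ I, #(openCells s S T H t)

def IsCompatible (χ : ι → Finset α) (S : Finset ι) (I : Finset α) : Prop :=
  ∀ j ∈ S, χ j ⊆ I ∨ Disjoint (χ j) I

structure IsSchedule (χ : ι → Finset α) (p : ι → ℕ) (s : ι → ℝ) (S : Finset ι)
    (T : ι → Finset α) (H : ι → α → Fin m) : Prop where
  subset_window : ∀ j ∈ S, T j ⊆ χ j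
  card_slots : ∀ j ∈ S, #(T j) = p j
  load_le_one : ∀ i t, load s S T H i t ≤ 1

structure IsGoodSchedule (χ : ι → Finset α) (p : ι → ℕ) (s : ι → ℝ) (lam : ℝ) (S : Finset ι)
    (T : ι → Finset α) (H : ι → α → Fin m) : Prop extends IsSchedule χ p s S T H where
  card_openCells_le_one : ∀ t, #(openCells s S T H t) ≤ 1
  openCount_le : ∀ I, IsCompatible χ S I → (openCount s S T H I : ℝ) ≤ lam * #I

variable {χ : ι → Finset α} {p : ι → ℕ} {s : ι → ℝ} {lam : ℝ} {S : Finset ι}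
  {T : ι → Finset α} {H : ι → α → Fin m}

theorem load_nonneg (hs : ∀ j, 0 ≤ s j) (i : Fin m) (t : α) : 0 ≤ load s S T H i t :=
  Finset.sum_nonneg fun j _ => hs j

theorem sum_load (t : α) : ∑ i, load s S T H i t = ∑ j ∈ S with t ∈ T j, s j := by
  simp only [load]
  rw [← Finset.sum_fiberwise (S.filter (t ∈ T ·)) (fun j => H j t) s]
  exact Finset.sum_congr rfl fun i _ => by rw [Finset.filter_filter]

theorem sum_sum_load (I : Finset α) :
    ∑ t ∈ I, ∑ i, load s S T H i t = ∑ j ∈ S, (#(I ∩ T j) : ℝ) * s j := by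
  simp_rw [sum_load, Finset.sum_filter]
  rw [Finset.sum_comm]
  refine Finset.sum_congr rfl fun j _ => ?_
  rw [← Finset.sum_filter, Finset.sum_const, nsmul_eq_mul, Finset.filter_mem_eq_inter]

theorem IsSchedule.area_le (hs : ∀ j, 0 ≤ s j) (h : IsSchedule χ p s S T H) (I : Finset α) :
    area χ (fun j => p j * s j) S I ≤ m * #I := by
  calc area χ (fun j => p j * s j) S I = ∑ j ∈ S with χ j ⊆ I, (#(I ∩ T j) : ℝ) * s j := by
        refine Finset.sum_congr rfl fun j hj => ?_
        obtain ⟨hjS, hjI⟩ := Finset.mem_filter.1 hj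
        rw [Finset.inter_eq_right.2 ((h.subset_window j hjS).trans hjI), h.card_slots j hjS]
    _ ≤ ∑ j ∈ S, (#(I ∩ T j) : ℝ) * s j :=
        Finset.sum_le_sum_of_subset_of_nonneg (Finset.filter_subset _ _) fun j _ _ =>
          mul_nonneg (Nat.cast_nonneg _) (hs j)
    _ = ∑ t ∈ I, ∑ i, load s S T H i t := (sum_sum_load I).symm
    _ ≤ ∑ t ∈ I, ∑ _i : Fin m, (1 : ℝ) :=
        Finset.sum_le_sum fun t _ => Finset.sum_le_sum fun i _ => h.load_le_one i t
    _ = m * #I := by simp [mul_comm]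

theorem sum_sum_load_le_area (hs : ∀ j, 0 ≤ s j) (hT : ∀ j ∈ S, T j ⊆ χ j)
    (hcard : ∀ j ∈ S, #(T j) = p j) {I : Finset α} (hI : IsCompatible χ S I) :
    ∑ t ∈ I, ∑ i, load s S T H i t ≤ area χ (fun j => p j * s j) S I := by
  rw [sum_sum_load, area, ← Finset.sum_filter_add_sum_filter_not S (fun j => χ j ⊆ I)]
  have hout : ∑ j ∈ S with ¬χ j ⊆ I, (#(I ∩ T j) : ℝ) * s j = 0 := by
    refine Finset.sum_eq_zero fun j hj => ?_
    obtain ⟨hjS, hjI⟩ := Finset.mem_filter.1 hj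
    have hdisj := (((hI j hjS).resolve_left hjI).mono_left (hT j hjS)).symm
    rw [Finset.disjoint_iff_inter_eq_empty.1 hdisj, Finset.card_empty, Nat.cast_zero, zero_mul]
  rw [hout, add_zero]
  refine Finset.sum_le_sum fun j hj => mul_le_mul_of_nonneg_right ?_ (hs j)
  rw [← hcard j (Finset.mem_filter.1 hj).1]
  exact_mod_cast Finset.card_le_card Finset.inter_subset_right

theorem card_mul_le_sum_sum_load {B : Finset α} {x : ℝ}
    (hB : ∀ t ∈ B, ∀ i, x ≤ load s S T H i t) :
    #B * (m * x) ≤ ∑ t ∈ B, ∑ i, load s S T H i t := by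
  have := B.card_nsmul_le_sum _ (m * x) fun t ht => by
    simpa using Finset.univ.card_nsmul_le_sum (fun i => load s S T H i t) x fun i _ => hB t ht i
  simpa using this

/-- In a slot without empty cells, every cell that is not open is at least half full. -/
theorem sub_card_openCells_le_two_mul_sum_load (hs : ∀ j, 0 ≤ s j) {t : α}
    (hpos : ∀ i, 0 < load s S T H i t) :
    (m : ℝ) - #(openCells s S T H t) ≤ 2 * ∑ i, load s S T H i t := by
  have hhalf : ∀ i ∈ (openCells s S T H t)ᶜ, (1 / 2 : ℝ) ≤ load s S T H i t := fun i hi => by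
    simpa [openCells, hpos i] using hi
  calc (m : ℝ) - #(openCells s S T H t) = 2 * ∑ _i ∈ (openCells s S T H t)ᶜ, (1 / 2 : ℝ) := by
        rw [Finset.sum_const, Finset.card_compl, Fintype.card_fin, nsmul_eq_mul,
          Nat.cast_sub ((Finset.card_le_univ _).trans_eq (Fintype.card_fin m))]
        ring
    _ ≤ 2 * ∑ i, load s S T H i t := by
        gcongr
        exact (Finset.sum_le_sum hhalf).trans (Finset.sum_le_sum_of_subset_of_nonneg
          (Finset.subset_univ _) fun i _ _ => load_nonneg hs i t)

/-- Counting argument: by the area budget, few slots of `χ j` are blocked for the job `j`. A small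
job is blocked only by slots whose total load exceeds `m * (1 - s j)`; a large one only by slots
all of whose non-open cells are at least half full, and open cells are scarce. -/
theorem IsGoodSchedule.le_card_fitting {j : ι} (hm : 1 ≤ m) (hs0 : ∀ j, 0 < s j)
    (hs1 : ∀ j, s j ≤ 1) (hlam1 : lam < 1) (hG : IsGoodSchedule χ p s lam S T H)
    (hcompat : IsCompatible χ S (χ j))
    (hpj : (p j : ℝ) ≤ lam * #(χ j))
    (harea : area χ (fun k => p k * s k) S (χ j) + p j * s j ≤ (1 - lam) / 2 * m * #(χ j)) :
    p j ≤ #{t ∈ χ j | ∃ i, load s S T H i t + s j ≤ 1} := by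
  have hs : ∀ k, 0 ≤ s k := fun k => (hs0 k).le
  set B := {t ∈ χ j | ¬∃ i, load s S T H i t + s j ≤ 1}
  suffices hB : (#B : ℝ) ≤ #(χ j) - p j by
    have hsplit : #{t ∈ χ j | ∃ i, load s S T H i t + s j ≤ 1} + #B = #(χ j) :=
      Finset.card_filter_add_card_filter_not _
    have : #B + p j ≤ #(χ j) := by exact_mod_cast (by linarith : (#B : ℝ) + p j ≤ #(χ j))
    omega
  have hblocked : ∀ t ∈ B, ∀ i, 1 - s j < load s S T H i t := fun t ht i => by
    have := (Finset.mem_filter.1 ht).2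
    simp only [not_exists, not_le] at this
    linarith [this i]
  have hload : ∑ t ∈ B, ∑ i, load s S T H i t ≤ (1 - lam) / 2 * m * #(χ j) - p j * s j := by
    have hsub : ∑ t ∈ B, ∑ i, load s S T H i t ≤ ∑ t ∈ χ j, ∑ i, load s S T H i t :=
      Finset.sum_le_sum_of_subset_of_nonneg (Finset.filter_subset _ _) fun t _ _ =>
        Finset.sum_nonneg fun i _ => load_nonneg hs i t
    linarith [sum_sum_load_le_area (H := H) hs hG.subset_window hG.card_slots hcompat]
  have hm' : (1 : ℝ) ≤ m := by exact_mod_cast hm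
  have hp0 : (0 : ℝ) ≤ p j := Nat.cast_nonneg _
  have hℓ : (0 : ℝ) ≤ #(χ j) := Nat.cast_nonneg _
  rcases le_or_gt (s j) (1 / 2) with hsj | hsj
  · have hslot := card_mul_le_sum_sum_load (B := B) fun t ht i => (hblocked t ht i).le
    have hpos : 0 < (m : ℝ) * (1 - s j) := by nlinarith
    rw [← mul_le_mul_iff_of_pos_right hpos]
    nlinarith [mul_le_mul_of_nonneg_right hpj (hs j), mul_nonneg hℓ (hs j), hs0 j,
      mul_nonneg (mul_nonneg hℓ (sub_nonneg.2 hlam1.le)) (sub_nonneg.2 hsj)]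
  · have hslot : #B * (m : ℝ) - ∑ t ∈ B, (#(openCells s S T H t) : ℝ) ≤
        2 * ∑ t ∈ B, ∑ i, load s S T H i t := by
      rw [← nsmul_eq_mul, ← Finset.sum_const, ← Finset.sum_sub_distrib, Finset.mul_sum]
      exact Finset.sum_le_sum fun t ht => sub_card_openCells_le_two_mul_sum_load hs fun i => by
        linarith [hblocked t ht i, hs1 j]
    have hopen : ∑ t ∈ B, (#(openCells s S T H t) : ℝ) ≤ lam * #(χ j) :=
      le_trans (by exact_mod_cast Finset.sum_le_sum_of_subset (Finset.filter_subset _ _))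
        (hG.openCount_le _ hcompat)
    rw [← mul_le_mul_iff_of_pos_right (by linarith : (0 : ℝ) < m)]
    nlinarith [mul_le_mul_of_nonneg_right hpj (by linarith : (0 : ℝ) ≤ m - 1),
      mul_nonneg hp0 (by linarith : (0 : ℝ) ≤ 2 * s j - 1)]

theorem IsCompatible.sdiff {I J : Finset α} (hI : IsCompatible χ S I) (hJ : IsCompatible χ S J) :
    IsCompatible χ S (I \ J) := by
  intro k hk
  rcases hJ k hk with hkJ | hkJ
  · exact Or.inr (Finset.disjoint_sdiff.mono_left hkJ)
  rcases hI k hk with hkI | hkI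
  · exact Or.inl (Finset.subset_sdiff.2 ⟨hkI, hkJ⟩)
  · exact Or.inr (hkI.mono_right Finset.sdiff_subset)

section Insert

variable [DecidableEq ι] {j : ι} {C : Finset α} {cell : α → Fin m}

theorem load_insert (hj : j ∉ S) (i : Fin m) (t : α) :
    load s (insert j S) (update T j C) (update H j cell) i t =
      load s S T H i t + if t ∈ C ∧ cell t = i then s j else 0 := by
  have hS : S.filter (fun k => t ∈ update T j C k ∧ update H j cell k t = i) =
      S.filter (fun k => t ∈ T k ∧ H k t = i) := by
    refine Finset.filter_congr fun k hk => ?_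
    rw [update_of_ne (ne_of_mem_of_not_mem hk hj), update_of_ne (ne_of_mem_of_not_mem hk hj)]
  simp only [load, Finset.filter_insert, update_self, hS]
  split_ifs with h
  · rw [Finset.sum_insert (by simp [hj]), add_comm]
  · rw [add_zero]

theorem mem_openCells_insert_iff (hj : j ∉ S) {i : Fin m} {t : α} (h : t ∈ C → cell t ≠ i) :
    i ∈ openCells s (insert j S) (update T j C) (update H j cell) t ↔
      i ∈ openCells s S T H t := by
  have : ¬(t ∈ C ∧ cell t = i) := fun h' => h h'.1 h'.2
  simp only [openCells, Finset.mem_filter, Finset.mem_univ, true_and, load_insert hj, this,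
    if_false, add_zero]

theorem openCells_insert_of_notMem (hj : j ∉ S) {t : α} (ht : t ∉ C) :
    openCells s (insert j S) (update T j C) (update H j cell) t = openCells s S T H t :=
  Finset.ext fun _ => mem_openCells_insert_iff hj fun h => absurd h ht

theorem openCells_insert_subset_insert (hj : j ∉ S) (t : α) :
    openCells s (insert j S) (update T j C) (update H j cell) t ⊆
      insert (cell t) (openCells s S T H t) := by
  intro i hi
  rcases eq_or_ne (cell t) i with rfl | hne
  · exact Finset.mem_insert_self _ _
  · exact Finset.mem_insert_of_mem ((mem_openCells_insert_iff hj fun _ => hne).1 hi)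

theorem openCells_insert_subset (hs : ∀ j, 0 ≤ s j) (hj : j ∉ S) {t : α}
    (ht : t ∈ C → 1 / 2 ≤ s j ∨ cell t ∈ openCells s S T H t) :
    openCells s (insert j S) (update T j C) (update H j cell) t ⊆ openCells s S T H t := by
  intro i hi
  rcases eq_or_ne (cell t) i with rfl | hne
  · by_cases htC : t ∈ C
    · refine (ht htC).resolve_left fun hsj => ?_
      simp only [openCells, Finset.mem_filter, Finset.mem_univ, true_and, load_insert hj,
        htC, if_true] at hi
      linarith [load_nonneg (S := S) (T := T) (H := H) hs (cell t) t]
    · exact (mem_openCells_insert_iff hj fun h => absurd h htC).1 hi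
  · exact (mem_openCells_insert_iff hj fun _ => hne).1 hi

theorem openCount_insert_of_disjoint (hj : j ∉ S) {I : Finset α} (hCI : Disjoint C I) :
    openCount s (insert j S) (update T j C) (update H j cell) I = openCount s S T H I :=
  Finset.sum_congr rfl fun _ ht => by
    rw [openCells_insert_of_notMem hj (Finset.disjoint_right.1 hCI ht)]

theorem card_openCells_insert_le_one (hs : ∀ j, 0 ≤ s j) (hj : j ∉ S)
    (hone : ∀ t, #(openCells s S T H t) ≤ 1)
    (hcell : ∀ t ∈ C,
      1 / 2 ≤ s j ∨ cell t ∈ openCells s S T H t ∨ openCells s S T H t = ∅) (t : α) :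
    #(openCells s (insert j S) (update T j C) (update H j cell) t) ≤ 1 := by
  by_cases htC : t ∈ C
  · rcases hcell t htC with h | h | h
    · exact (Finset.card_le_card (openCells_insert_subset hs hj fun _ => Or.inl h)).trans (hone t)
    · exact (Finset.card_le_card (openCells_insert_subset hs hj fun _ => Or.inr h)).trans (hone t)
    · exact (Finset.card_le_card (openCells_insert_subset_insert hj t)).trans (by simp [h])
  · rw [openCells_insert_of_notMem hj htC]
    exact hone t

theorem IsGoodSchedule.openCount_insert_window_le (hs : ∀ j, 0 ≤ s j)
    (hG : IsGoodSchedule χ p s lam S T H) (hj : j ∉ S) (hcompat : IsCompatible χ S (χ j))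
    (hpj : (p j : ℝ) ≤ lam * #(χ j)) (hC : C ⊆ χ j) (hCcard : #C = p j)
    (hone : ∀ t, #(openCells s (insert j S) (update T j C) (update H j cell) t) ≤ 1)
    (hcount : (∀ t ∈ C, 1 / 2 ≤ s j ∨ cell t ∈ openCells s S T H t) ∨
      ∀ t ∈ χ j, t ∉ C → openCells s S T H t = ∅) :
    (openCount s (insert j S) (update T j C) (update H j cell) (χ j) : ℝ) ≤ lam * #(χ j) := by
  rcases hcount with h | h
  · refine le_trans ?_ (hG.openCount_le _ hcompat)
    exact_mod_cast Finset.sum_le_sum fun t _ =>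
      Finset.card_le_card (openCells_insert_subset hs hj (h t))
  · refine le_trans ?_ hpj
    have hCsum : #C = ∑ t ∈ χ j, if t ∈ C then 1 else 0 := by
      rw [← Finset.card_filter, Finset.filter_mem_eq_inter, Finset.inter_eq_right.2 hC]
    rw [← hCcard, hCsum]
    refine Nat.cast_le.2 (Finset.sum_le_sum fun t ht => ?_)
    split_ifs with htC
    · exact hone t
    · rw [openCells_insert_of_notMem hj htC, h t ht htC, Finset.card_empty]

theorem IsGoodSchedule.insert_job (hs : ∀ j, 0 ≤ s j) (hG : IsGoodSchedule χ p s lam S T H)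
    (hj : j ∉ S) (hcompat : IsCompatible χ S (χ j)) (hpj : (p j : ℝ) ≤ lam * #(χ j))
    (hC : C ⊆ χ j) (hCcard : #C = p j) (hfit : ∀ t ∈ C, load s S T H (cell t) t + s j ≤ 1)
    (hcell : ∀ t ∈ C,
      1 / 2 ≤ s j ∨ cell t ∈ openCells s S T H t ∨ openCells s S T H t = ∅)
    (hcount : (∀ t ∈ C, 1 / 2 ≤ s j ∨ cell t ∈ openCells s S T H t) ∨
      ∀ t ∈ χ j, t ∉ C → openCells s S T H t = ∅) :
    IsGoodSchedule χ p s lam (insert j S) (update T j C) (update H j cell) := by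
  have hone := card_openCells_insert_le_one hs hj hG.card_openCells_le_one hcell
  have hwindow := hG.openCount_insert_window_le hs hj hcompat hpj hC hCcard hone hcount
  refine ⟨⟨fun k hk => ?_, fun k hk => ?_, fun i t => ?_⟩, hone, fun I hI => ?_⟩
  · rcases Finset.mem_insert.1 hk with rfl | hk
    · simpa using hC
    · rw [update_of_ne (ne_of_mem_of_not_mem hk hj)]
      exact hG.subset_window k hk
  · rcases Finset.mem_insert.1 hk with rfl | hk
    · simpa using hCcard
    · rw [update_of_ne (ne_of_mem_of_not_mem hk hj)]
      exact hG.card_slots k hk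
  · rw [load_insert hj]
    split_ifs with h
    · rw [← h.2]
      exact hfit t h.1
    · simpa using hG.load_le_one i t
  have hIS : IsCompatible χ S I := fun k hk => hI k (Finset.mem_insert_of_mem hk)
  rcases hI j (Finset.mem_insert_self j S) with hjI | hjI
  · -- split `I` into `χ j` and the rest, where nothing changed
    have hrest := hG.openCount_le _ (hIS.sdiff hcompat)
    rw [← openCount_insert_of_disjoint (cell := cell) hj
      (Finset.disjoint_sdiff.mono_left hC)] at hrest
    have hcard : (#(I \ χ j) : ℝ) + #(χ j) = #I := by
      exact_mod_cast Finset.card_sdiff_add_card_eq_card hjI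
    rw [openCount, ← Finset.sum_sdiff hjI, Nat.cast_add, ← hcard, mul_add]
    exact add_le_add hrest hwindow
  · rw [openCount_insert_of_disjoint hj (hjI.mono_left hC)]
    exact hG.openCount_le I hIS

theorem IsGoodSchedule.exists_insert (hm : 1 ≤ m) (hs0 : ∀ j, 0 < s j) (hs1 : ∀ j, s j ≤ 1)
    (hlam1 : lam < 1) (hG : IsGoodSchedule χ p s lam S T H) (hj : j ∉ S)
    (hcompat : IsCompatible χ S (χ j)) (hpj : (p j : ℝ) ≤ lam * #(χ j))
    (harea : area χ (fun k => p k * s k) S (χ j) + p j * s j ≤ (1 - lam) / 2 * m * #(χ j)) :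
    ∃ (T' : ι → Finset α) (H' : ι → α → Fin m), IsGoodSchedule χ p s lam (insert j S) T' H' := by
  set F := {t ∈ χ j | ∃ i, load s S T H i t + s j ≤ 1}
  have hF := hG.le_card_fitting hm hs0 hs1 hlam1 hcompat hpj harea
  have : Nonempty (Fin m) := ⟨⟨0, hm⟩⟩
  have hcell : ∀ t ∈ F, ∃ i, load s S T H i t + s j ≤ 1 ∧
      (s j < 1 / 2 → (openCells s S T H t).Nonempty → i ∈ openCells s S T H t) := by
    intro t ht
    by_cases h : s j < 1 / 2 ∧ (openCells s S T H t).Nonempty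
    · obtain ⟨i, hi⟩ := h.2
      have := (Finset.mem_filter.1 hi).2.2
      exact ⟨i, by linarith [h.1], fun _ _ => hi⟩
    · obtain ⟨i, hi⟩ := (Finset.mem_filter.1 ht).2
      exact ⟨i, hi, fun h1 h2 => absurd ⟨h1, h2⟩ h⟩
  choose! cell hcell using hcell
  obtain ⟨C, hCF, hCcard, hCA⟩ := exists_subset_card_eq_and_subset_or_superset_s3
    (Finset.filter_subset (fun t => (openCells s S T H t).Nonempty) F) hF
  refine ⟨_, _, hG.insert_job (fun k => (hs0 k).le) hj hcompat hpj
    (hCF.trans (Finset.filter_subset _ _)) hCcard (fun t ht => (hcell t (hCF ht)).1)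
    (fun t ht => ?_) ?_⟩
  · by_cases hsj : 1 / 2 ≤ s j
    · exact Or.inl hsj
    rcases (openCells s S T H t).eq_empty_or_nonempty with h | h
    · exact Or.inr (Or.inr h)
    · exact Or.inr (Or.inl ((hcell t (hCF ht)).2 (not_le.1 hsj) h))
  · by_cases hsj : 1 / 2 ≤ s j
    · exact Or.inl fun _ _ => Or.inl hsj
    rcases hCA with hCA | hAC
    · exact Or.inl fun t ht =>
        Or.inr ((hcell t (hCF ht)).2 (not_le.1 hsj) (Finset.mem_filter.1 (hCA ht)).2)
    · refine Or.inr fun t ht htC => Finset.eq_empty_of_forall_notMem fun i hi => ?_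
      -- an open cell has room for the small job, so `t` would be a fitting slot with an open
      -- cell, and all of those are in `C`
      have hload := (Finset.mem_filter.1 hi).2.2
      exact htC (hAC (Finset.mem_filter.2
        ⟨Finset.mem_filter.2 ⟨ht, i, by linarith [not_le.1 hsj]⟩, i, hi⟩))

end Insert

theorem isGoodSchedule_empty (hlam : 0 ≤ lam) (T : ι → Finset α) (H : ι → α → Fin m) :
    IsGoodSchedule χ p s lam ∅ T H where
  subset_window := by simp
  card_slots := by simp
  load_le_one := by simp [load]
  card_openCells_le_one := by simp [openCells, load]
  openCount_le I _ := by
    simpa [openCount, openCells, load] using mul_nonneg hlam (Nat.cast_nonneg _)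

theorem exists_isGoodSchedule [DecidableEq ι] (hm : 1 ≤ m) (hχ : IsLaminar χ)
    (hs0 : ∀ j, 0 < s j) (hs1 : ∀ j, s j ≤ 1) (hlam0 : 0 ≤ lam) (hlam1 : lam < 1)
    (hp : ∀ j, (p j : ℝ) ≤ lam * #(χ j)) (S : Finset ι)
    (hS : ∀ k ∈ S, area χ (fun j => p j * s j) S (χ k) ≤ (1 - lam) / 2 * m * #(χ k)) :
    ∃ (T : ι → Finset α) (H : ι → α → Fin m), IsGoodSchedule χ p s lam S T H := by
  have ha : ∀ j, 0 ≤ (p j : ℝ) * s j := fun j => mul_nonneg (Nat.cast_nonneg _) (hs0 j).le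
  induction S using Finset.induction_on_max_value (fun j => #(χ j)) with
  | empty => exact ⟨fun _ => ∅, fun _ _ => ⟨0, hm⟩, isGoodSchedule_empty hlam0 _ _⟩
  | insert j S hj hmax ih =>
    obtain ⟨T, H, hG⟩ := ih fun k hk =>
      (area_mono ha (Finset.subset_insert j S)).trans (hS k (Finset.mem_insert_of_mem hk))
    have hcompat : IsCompatible χ S (χ j) := fun k hk => by
      rcases hχ k j with h | h | h
      · exact Or.inl h
      · exact Or.inl (Finset.eq_of_subset_of_card_le h (hmax k hk)).symm.subset
      · exact Or.inr h
    have harea := hS j (Finset.mem_insert_self j S)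
    rw [area_insert_of_subset hj subset_rfl, add_comm] at harea
    exact hG.exists_insert hm hs0 hs1 hlam1 hj hcompat (hp j) harea

end Schedule

section Selection

variable {χ : ι → Finset α} {a : ι → ℝ} {c θ : ℝ}

def WithinBudget (χ : ι → Finset α) (a : ι → ℝ) (c : ℝ) (S : Finset ι) : Prop :=
  ∀ k, area χ a S (χ k) ≤ c * #(χ k)

/-- Invariant of the greedy scan that has processed the jobs of `P` and kept those of `A`. -/
structure IsGreedySelection (χ : ι → Finset α) (a : ι → ℝ) (c θ : ℝ) (P A : Finset ι) :
    Prop where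
  subset : A ⊆ P
  withinBudget : WithinBudget χ a c A
  saturated : ∀ j ∈ P, j ∉ A → ∃ k, χ j ⊆ χ k ∧ θ * #(χ k) ≤ area χ a A (χ k)

theorem isGreedySelection_empty (hc : 0 ≤ c) : IsGreedySelection χ a c θ ∅ ∅ where
  subset := subset_rfl
  withinBudget k := by simpa [area] using mul_nonneg hc (Nat.cast_nonneg _)
  saturated j hj := absurd hj (Finset.notMem_empty j)

theorem IsGreedySelection.exists_insert [DecidableEq ι] {lam : ℝ} {P A : Finset ι} {b : ι}
    (h : IsGreedySelection χ a c θ P A) (hb : b ∉ P) (ha : ∀ j, 0 ≤ a j)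
    (hab : a b ≤ lam * #(χ b)) (hlam : 0 ≤ lam) (hθ : θ + lam ≤ c) :
    ∃ A', (A' = A ∨ A' = insert b A) ∧ IsGreedySelection χ a c θ (insert b P) A' := by
  by_cases hB : WithinBudget χ a c (insert b A)
  · refine ⟨insert b A, Or.inr rfl, Finset.insert_subset_insert b h.subset, hB, ?_⟩
    intro j hj hjA
    have hjP : j ∈ P := (Finset.mem_insert.1 hj).resolve_left fun e =>
      hjA (e ▸ Finset.mem_insert_self _ _)
    obtain ⟨k, hjk, hk⟩ := h.saturated j hjP fun h' => hjA (Finset.mem_insert_of_mem h')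
    exact ⟨k, hjk, hk.trans (area_mono ha (Finset.subset_insert b A))⟩
  refine ⟨A, Or.inl rfl, h.subset.trans (Finset.subset_insert b P), h.withinBudget, ?_⟩
  intro j hj hjA
  rcases Finset.mem_insert.1 hj with rfl | hjP
  · -- the budget of some window `χ k ⊇ χ j` was exceeded, and `a j ≤ lam * #(χ k)`
    obtain ⟨k, hk⟩ := not_forall.1 hB
    have hjk : χ j ⊆ χ k := by
      by_contra hjk
      exact hk (by rw [area_insert_of_not_subset hjk]; exact h.withinBudget k)
    rw [area_insert_of_subset hjA hjk, not_le] at hk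
    have hcard : lam * #(χ j) ≤ lam * #(χ k) :=
      mul_le_mul_of_nonneg_left (by exact_mod_cast Finset.card_le_card hjk) hlam
    have hθk : (θ + lam) * #(χ k) ≤ c * #(χ k) := mul_le_mul_of_nonneg_right hθ (by positivity)
    exact ⟨k, hjk, by linarith⟩
  · exact h.saturated j hjP hjA

/-- Inside each maximal saturated window the rejected jobs have area at most `(1 - ω) / ω` times
the kept ones. -/
theorem IsGreedySelection.mul_sum_le [Fintype ι] {ω M : ℝ} {P A : Finset ι}
    (h : IsGreedySelection χ a c (ω * M) P A) (hχ : IsLaminar χ) (hne : ∀ j, (χ j).Nonempty)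
    (ha : ∀ j, 0 ≤ a j) (hω0 : 0 ≤ ω) (hω1 : ω ≤ 1)
    (hcap : ∀ k, area χ a P (χ k) ≤ M * #(χ k)) :
    ω * ∑ j ∈ P, a j ≤ ∑ j ∈ A, a j := by
  classical
  set V : Finset (Finset α) :=
    (Finset.univ.filter fun k => ω * M * #(χ k) ≤ area χ a A (χ k)).image χ
  set Vmax := V.filter (Maximal (· ∈ V))
  have hV : ∀ u ∈ V, ∃ k, u = χ k ∧ ω * M * #u ≤ area χ a A u := by
    intro u hu
    obtain ⟨k, hk, rfl⟩ := Finset.mem_image.1 hu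
    exact ⟨k, rfl, (Finset.mem_filter.1 hk).2⟩
  have hdisj : (Vmax : Set (Finset α)).PairwiseDisjoint id := by
    refine (pairwiseDisjoint_maximal fun u v hu hv => ?_).subset fun u hu =>
      (Finset.mem_filter.1 hu).2
    obtain ⟨k, rfl, -⟩ := hV u hu
    obtain ⟨k', rfl, -⟩ := hV v hv
    exact hχ k k'
  have hrejected : ∑ j ∈ P \ A, a j = ∑ u ∈ Vmax, area χ a (P \ A) u := by
    rw [sum_area_eq_of_pairwiseDisjoint hdisj hne, Finset.filter_true_of_mem]
    intro j hj
    obtain ⟨hjP, hjA⟩ := Finset.mem_sdiff.1 hj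
    obtain ⟨k, hjk, hk⟩ := h.saturated j hjP hjA
    obtain ⟨u, hku, hu⟩ := V.exists_le_maximal (Finset.mem_image_of_mem χ (by simpa using hk))
    exact ⟨u, Finset.mem_filter.2 ⟨hu.1, hu⟩, hjk.trans hku⟩
  have haccepted : ∑ u ∈ Vmax, area χ a A u ≤ ∑ j ∈ A, a j := by
    rw [sum_area_eq_of_pairwiseDisjoint hdisj hne]
    exact Finset.sum_le_sum_of_subset_of_nonneg (Finset.filter_subset _ _) fun j _ _ => ha j
  have hwindow : ∀ u ∈ Vmax, ω * area χ a (P \ A) u ≤ (1 - ω) * area χ a A u := by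
    intro u hu
    obtain ⟨k, rfl, hk⟩ := hV u (Finset.mem_filter.1 hu).1
    have hsplit := area_sdiff_add (χ := χ) (a := a) (v := χ k) h.subset
    have := mul_le_mul_of_nonneg_left (hsplit ▸ hcap k) hω0
    nlinarith
  calc ω * ∑ j ∈ P, a j = ω * ∑ j ∈ P \ A, a j + ω * ∑ j ∈ A, a j := by
        rw [← mul_add, Finset.sum_sdiff h.subset]
    _ ≤ (1 - ω) * ∑ j ∈ A, a j + ω * ∑ j ∈ A, a j := by
        rw [hrejected, Finset.mul_sum]
        gcongr
        exact (Finset.sum_le_sum hwindow).trans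
          (by rw [← Finset.mul_sum]; exact mul_le_mul_of_nonneg_left haccepted (by linarith))
    _ = ∑ j ∈ A, a j := by ring

end Selection

section Weight

variable [Fintype ι] {χ : ι → Finset α} {a : ι → ℝ} {c lam ω M : ℝ}

/-- Abel summation: the jobs are added in order of nonincreasing density `w j / a j` (the new job
has the least density), and `δ` is any lower bound of the densities seen so far. -/
theorem exists_isGreedySelection_weight_ge [DecidableEq ι] (hχ : IsLaminar χ)
    (hne : ∀ j, (χ j).Nonempty) (ha : ∀ j, 0 < a j) (hal : ∀ j, a j ≤ lam * #(χ j))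
    (hlam : 0 ≤ lam) (hω0 : 0 ≤ ω) (hω1 : ω ≤ 1) (hM : 0 ≤ M) (hc : ω * M + lam ≤ c)
    (w : ι → ℝ) (P : Finset ι) (hcap : ∀ k, area χ a P (χ k) ≤ M * #(χ k)) :
    ∃ A, IsGreedySelection χ a c (ω * M) P A ∧
      ∀ δ, (∀ j ∈ P, δ ≤ w j / a j) →
        δ * (∑ j ∈ A, a j - ω * ∑ j ∈ P, a j) ≤ ∑ j ∈ A, w j - ω * ∑ j ∈ P, w j := by
  have ha0 : ∀ j, 0 ≤ a j := fun j => (ha j).le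
  induction P using Finset.induction_on_min_value (fun j => w j / a j) with
  | empty => exact ⟨∅, isGreedySelection_empty (by nlinarith), fun δ _ => by simp⟩
  | insert b P hb hmin ih =>
    obtain ⟨A, hA, hAbel⟩ := ih fun k =>
      (area_mono ha0 (Finset.subset_insert b P)).trans (hcap k)
    obtain ⟨A', hA'A, hA'⟩ := hA.exists_insert hb ha0 (hal b) hlam (by linarith)
    refine ⟨A', hA', fun δ hδ => ?_⟩
    have hy := hA.mul_sum_le hχ hne ha0 hω0 hω1 fun k =>
      (area_mono ha0 (Finset.subset_insert b P)).trans (hcap k)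
    have hy' := hA'.mul_sum_le hχ hne ha0 hω0 hω1 hcap
    have hbA : b ∉ A := fun h => hb (hA.subset h)
    have hstep : (∑ j ∈ A', w j - ω * ∑ j ∈ insert b P, w j) - (∑ j ∈ A, w j - ω * ∑ j ∈ P, w j) =
        w b / a b * ((∑ j ∈ A', a j - ω * ∑ j ∈ insert b P, a j) -
          (∑ j ∈ A, a j - ω * ∑ j ∈ P, a j)) := by
      rcases hA'A with rfl | rfl
      · rw [Finset.sum_insert hb, Finset.sum_insert hb]
        field_simp [(ha b).ne']
        ring
      · rw [Finset.sum_insert hb, Finset.sum_insert hb, Finset.sum_insert hbA,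
          Finset.sum_insert hbA]
        field_simp [(ha b).ne']
        ring
    have hδb := mul_le_mul_of_nonneg_right (hδ b (Finset.mem_insert_self b P)) (sub_nonneg.2 hy')
    linarith [hAbel _ hmin]

theorem exists_withinBudget_weight_ge (hχ : IsLaminar χ) (hne : ∀ j, (χ j).Nonempty)
    (ha : ∀ j, 0 < a j) (hal : ∀ j, a j ≤ lam * #(χ j)) (hlam : 0 ≤ lam) (hω0 : 0 ≤ ω)
    (hω1 : ω ≤ 1) (hM : 0 ≤ M) (hc : ω * M + lam ≤ c) (w : ι → ℝ) (hw : ∀ j, 0 ≤ w j)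
    (O : Finset ι) (hcap : ∀ k, area χ a O (χ k) ≤ M * #(χ k)) :
    ∃ S, WithinBudget χ a c S ∧ ω * ∑ j ∈ O, w j ≤ ∑ j ∈ S, w j := by
  classical
  obtain ⟨S, hS, hAbel⟩ :=
    exists_isGreedySelection_weight_ge hχ hne ha hal hlam hω0 hω1 hM hc w O hcap
  have := hAbel 0 fun j _ => div_nonneg (hw j) (ha j).le
  exact ⟨S, hS.withinBudget, by linarith⟩

end Weight

theorem schedulable_iff_exists_isSchedule {m : ℕ} {r d : ι → ℤ} {p : ι → ℕ} {s : ι → ℝ}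
    {S : Finset ι} :
    Schedulable m r d p s S ↔ ∃ (T : ι → Finset ℤ) (H : ι → ℤ → Fin m),
      IsSchedule (fun j => Finset.Icc (r j) (d j)) p s S T H :=
  ⟨fun ⟨T, H, hT, hload⟩ => ⟨T, H, fun j hj => (hT j hj).1, fun j hj => (hT j hj).2, hload⟩,
    fun ⟨T, H, h⟩ => ⟨T, H, fun j hj => ⟨h.subset_window j hj, h.card_slots j hj⟩, h.load_le_one⟩⟩

theorem cast_card_Icc {a b : ℤ} (h : a ≤ b) : ((b - a + 1 : ℤ) : ℝ) = #(Finset.Icc a b) := by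
  have h' : ((b + 1 - a).toNat : ℤ) = b - a + 1 := by omega
  rw [Int.card_Icc, ← h', Int.cast_natCast]

theorem one_half_sub_mul_pos {m lam : ℝ} (hm : 0 < m) (hlam : lam < 1 - 2 / (m + 2)) :
    0 < 1 / 2 - lam * (1 / 2 + 1 / m) := by
  have h2 : 2 / (m + 2) * (m + 2) = 2 := div_mul_cancel₀ _ (by positivity)
  have h : (1 / 2 - lam * (1 / 2 + 1 / m)) * (2 * m) = m - lam * (m + 2) := by field_simp
  nlinarith [mul_lt_mul_of_pos_right hlam (by positivity : (0 : ℝ) < m + 2)]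

end MaxT

theorem stmt_3_general {ι : Type*} [Fintype ι]
    (m : ℕ) (hm : 1 ≤ m)
    (r d : ι → ℤ) (p : ι → ℕ) (s w : ι → ℝ)
    (hrd : ∀ j, r j ≤ d j)
    (hp1 : ∀ j, 1 ≤ p j)
    (hs0 : ∀ j, 0 < s j) (hs1 : ∀ j, s j ≤ 1)
    (hw : ∀ j, 0 < w j)
    (hlamin : LaminarWindows r d)
    (lam : ℝ) (hlam0 : 0 < lam) (hlam1 : lam < 1 - 2 / ((m : ℝ) + 2))
    (hslack : ∀ j, (p j : ℝ) ≤ lam * ((d j - r j + 1 : ℤ) : ℝ))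
    (ω : ℝ) (hω : ω = 1/2 - lam * (1/2 + 1/m))
    (W : ℝ)
    (hWach : ∃ O : Finset ι, Schedulable m r d p s O ∧ ∑ j ∈ O, w j = W) :
    0 < ω ∧
    (∀ S : Finset ι,
      (∀ k : ι,
        ∑ j ∈ S.filter (fun j => Finset.Icc (r j) (d j) ⊆ Finset.Icc (r k) (d k)),
            (p j : ℝ) * s j
          ≤ (ω + lam / m) * m * ((d k - r k + 1 : ℤ) : ℝ)) →
      Schedulable m r d p s S) ∧
    (∃ S : Finset ι,
      (∀ k : ι,
        ∑ j ∈ S.filter (fun j => Finset.Icc (r j) (d j) ⊆ Finset.Icc (r k) (d k)),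
            (p j : ℝ) * s j
          ≤ (ω + lam / m) * m * ((d k - r k + 1 : ℤ) : ℝ)) ∧
      ω * W ≤ ∑ j ∈ S, w j ∧
      Schedulable m r d p s S) := by
  classical
  set χ : ι → Finset ℤ := fun j => Finset.Icc (r j) (d j)
  have hm0 : (0 : ℝ) < m := by exact_mod_cast hm
  have hcard : ∀ j, ((d j - r j + 1 : ℤ) : ℝ) = #(χ j) := fun j => MaxT.cast_card_Icc (hrd j)
  have hpχ : ∀ j, (p j : ℝ) ≤ lam * #(χ j) := fun j => hcard j ▸ hslack j
  have hω0 : 0 < ω := hω ▸ MaxT.one_half_sub_mul_pos hm0 hlam1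
  have hlam1' : lam < 1 := by linarith [show 0 < 2 / ((m : ℝ) + 2) by positivity]
  have hbudget : (ω + lam / m) * m = (1 - lam) / 2 * m := by rw [hω]; field_simp; ring
  have hschedulable : ∀ S, MaxT.WithinBudget χ (fun j => p j * s j) ((ω + lam / m) * m) S →
      Schedulable m r d p s S := fun S hS => by
    obtain ⟨T, H, hG⟩ := MaxT.exists_isGoodSchedule hm hlamin hs0 hs1 hlam0.le hlam1' hpχ S
      fun k _ => (hS k).trans_eq (by rw [hbudget])
    exact MaxT.schedulable_iff_exists_isSchedule.2 ⟨T, H, hG.toIsSchedule⟩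
  refine ⟨hω0, fun S hS => hschedulable S fun k => hcard k ▸ hS k, ?_⟩
  obtain ⟨O, hO, rfl⟩ := hWach
  obtain ⟨T, H, hO⟩ := MaxT.schedulable_iff_exists_isSchedule.1 hO
  obtain ⟨S, hS, hSw⟩ := MaxT.exists_withinBudget_weight_ge hlamin
    (fun j => Finset.nonempty_Icc.2 (hrd j)) (a := fun j => p j * s j) (c := (ω + lam / m) * m)
    (fun j => mul_pos (by exact_mod_cast hp1 j) (hs0 j))
    (fun j => (mul_le_of_le_one_right (Nat.cast_nonneg _) (hs1 j)).trans (hpχ j)) hlam0.le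
    hω0.le (by rw [hω]; nlinarith [one_div_pos.2 hm0]) hm0.le (le_of_eq (by field_simp)) w
    (fun j => (hw j).le) O fun k => hO.area_le (fun j => (hs0 j).le) (χ k)
  exact ⟨S, fun k => (hcard k).symm ▸ hS k, hSw, hschedulable S hS⟩

theorem stmt_3 {ι : Type*} [Fintype ι]
    (m : ℕ) (hm : 1 ≤ m)
    (r d : ι → ℤ) (p : ι → ℕ) (s w : ι → ℝ)
    (hrd : ∀ j, r j ≤ d j)
    (hp1 : ∀ j, 1 ≤ p j)
    (hpw : ∀ j, (p j : ℤ) ≤ d j - r j + 1)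
    (hs0 : ∀ j, 0 < s j) (hs1 : ∀ j, s j ≤ 1)
    (hw : ∀ j, 0 < w j)
    (hlamin : LaminarWindows r d)
    (lam : ℝ) (hlam0 : 0 < lam) (hlam1 : lam < 1 - 2 / ((m : ℝ) + 2))
    (hslack : ∀ j, (p j : ℝ) ≤ lam * ((d j - r j + 1 : ℤ) : ℝ))
    (ω : ℝ) (hω : ω = 1/2 - lam * (1/2 + 1/m))
    (W : ℝ)
    (hWach : ∃ O : Finset ι, Schedulable m r d p s O ∧ ∑ j ∈ O, w j = W)
    (hWmax : ∀ O : Finset ι, Schedulable m r d p s O → ∑ j ∈ O, w j ≤ W) :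
    0 < ω ∧
    (∀ S : Finset ι,
      (∀ k : ι,
        ∑ j ∈ S.filter (fun j => Finset.Icc (r j) (d j) ⊆ Finset.Icc (r k) (d k)),
            (p j : ℝ) * s j
          ≤ (ω + lam / m) * m * ((d k - r k + 1 : ℤ) : ℝ)) →
      Schedulable m r d p s S) ∧
    (∃ S : Finset ι,
      (∀ k : ι,
        ∑ j ∈ S.filter (fun j => Finset.Icc (r j) (d j) ⊆ Finset.Icc (r k) (d k)),
            (p j : ℝ) * s j
          ≤ (ω + lam / m) * m * ((d k - r k + 1 : ℤ) : ℝ)) ∧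
      ω * W ≤ ∑ j ∈ S, w j ∧
      Schedulable m r d p s S) :=
  stmt_3_general m hm r d p s w hrd hp1 hs0 hs1 hw hlamin lam hlam0 hlam1 hslack ω hω W hWach
end

section
/- Let T ≥ 2 be an integer and let L(T) be the binary laminar family of subintervals of [1,T] with mapping 𝔏. Then for every interval χ ⊆ [1,T] with |χ| ≥ 3, the interval 𝔏(χ) exists and |χ| ≤ 4·|𝔏(χ)|. -/
/-- The binary laminar family `L(T)` of subintervals of `[1,T]`, given by a tree:
the root is `[1,T]`, and every node `[l,r]` with `r - l > 1` has the two children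
`[l, ⌊(l+r)/2⌋]` and `[⌊(l+r)/2⌋ + 1, r]`. -/
inductive BinLam (T : ℤ) : ℤ → ℤ → Prop
  | root : BinLam T 1 T
  | left {l r : ℤ} : BinLam T l r → 1 < r - l → BinLam T l ((l + r) / 2)
  | right {l r : ℤ} : BinLam T l r → 1 < r - l → BinLam T ((l + r) / 2 + 1) r

/-- `[l,r]` is the interval `𝔏([a,b])`: the largest interval of the binary laminar
family `L(T)` contained in `[a,b]`, ties broken by taking the rightmost one. -/
def IsLMap (T a b l r : ℤ) : Prop :=
  BinLam T l r ∧ a ≤ l ∧ r ≤ b ∧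
  ∀ l' r' : ℤ, BinLam T l' r' → a ≤ l' → r' ≤ b →
    (r' - l' < r - l ∨ (r' - l' = r - l ∧ r' ≤ r))

/-!
A node `[l, r]` of `L(T)` containing `[a, b]` either has a child containing `[a, b]`, into
which we descend, or its midpoint `m` splits `[a, b]` into `[a, m]` and `[m + 1, b]`, one of
which holds at least half of `[a, b]`. Say it is `[a, m]`, a suffix of the left child. Going
down that child, a suffix `[a, r']` of a node `[l', r']` with `l' < a` either lies in the right
child or contains the whole right child, which is at least half as large as `[a, r']`. Hence
some node inside `[a, b]` has at least a quarter of its slots, and so does `𝔏([a, b])`, the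
maximum of the finitely many nodes inside `[a, b]` in the lexicographic order on (length,
right end).
-/

namespace BinLam

variable {T : ℤ}

theorem le {l r : ℤ} (hT : 1 ≤ T) (h : BinLam T l r) : l ≤ r := by
  cases h <;> omega

theorem exists_suffix {l r : ℤ} (h : BinLam T l r) {a : ℤ} (hla : l ≤ a) (har : a < r) :
    ∃ l' r', BinLam T l' r' ∧ a ≤ l' ∧ r' ≤ r ∧ r - a + 1 ≤ 2 * (r' - l' + 1) := by
  by_cases hal : a ≤ l
  · exact ⟨l, r, h, hal, le_rfl, by omega⟩
  have hlr : 1 < r - l := by omega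
  by_cases ham : (l + r) / 2 + 1 ≤ a
  · exact exists_suffix (h.right hlr) ham har
  · exact ⟨_, r, h.right hlr, by omega, le_rfl, by omega⟩
termination_by (r - l).toNat
decreasing_by omega

theorem exists_prefix {l r : ℤ} (h : BinLam T l r) {b : ℤ} (hbr : b ≤ r) (hlb : l < b) :
    ∃ l' r', BinLam T l' r' ∧ l ≤ l' ∧ r' ≤ b ∧ b - l + 1 ≤ 2 * (r' - l' + 1) := by
  by_cases hrb : r ≤ b
  · exact ⟨l, r, h, le_rfl, hrb, by omega⟩
  have hlr : 1 < r - l := by omega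
  by_cases hbm : b ≤ (l + r) / 2
  · exact exists_prefix (h.left hlr) hbm hlb
  · exact ⟨l, _, h.left hlr, le_rfl, by omega, by omega⟩
termination_by (r - l).toNat
decreasing_by omega

theorem exists_quarter_of_subset {l r : ℤ} (h : BinLam T l r) {a b : ℤ} (hla : l ≤ a)
    (hbr : b ≤ r) (hab : 3 ≤ b - a + 1) :
    ∃ l' r', BinLam T l' r' ∧ a ≤ l' ∧ r' ≤ b ∧ b - a + 1 ≤ 4 * (r' - l' + 1) := by
  have hlr : 1 < r - l := by omega
  by_cases hbm : b ≤ (l + r) / 2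
  · exact exists_quarter_of_subset (h.left hlr) hla hbm hab
  by_cases ham : (l + r) / 2 + 1 ≤ a
  · exact exists_quarter_of_subset (h.right hlr) ham hbr hab
  by_cases hleft : b - (l + r) / 2 ≤ (l + r) / 2 - a + 1
  · obtain ⟨l', r', h', hal', hr', hsize⟩ := exists_suffix (h.left hlr) hla (by omega)
    exact ⟨l', r', h', hal', by omega, by omega⟩
  · obtain ⟨l', r', h', hl', hrb', hsize⟩ := exists_prefix (h.right hlr) hbr (by omega)
    exact ⟨l', r', h', by omega, hrb', by omega⟩
termination_by (r - l).toNat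
decreasing_by all_goals omega

end BinLam

theorem exists_isLMap_of_binLam {T a b l₀ r₀ : ℤ} (hT : 1 ≤ T) (h₀ : BinLam T l₀ r₀)
    (hal₀ : a ≤ l₀) (hr₀b : r₀ ≤ b) : ∃ l r, IsLMap T a b l r ∧ r₀ - l₀ ≤ r - l := by
  set S : Set (ℤ × ℤ) := {p | BinLam T p.1 p.2 ∧ a ≤ p.1 ∧ p.2 ≤ b}
  have hfin : S.Finite := by
    refine (Set.finite_Icc a b |>.prod (Set.finite_Icc a b)).subset ?_
    rintro ⟨l, r⟩ ⟨h, hal, hrb⟩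
    have := h.le hT
    exact ⟨⟨hal, by omega⟩, ⟨by omega, hrb⟩⟩
  obtain ⟨⟨l, r⟩, ⟨h, hal, hrb⟩, hle⟩ :=
    S.exists_max_image (fun p => toLex (p.2 - p.1, p.2)) hfin ⟨(l₀, r₀), h₀, hal₀, hr₀b⟩
  have hmaximal : ∀ l' r', BinLam T l' r' → a ≤ l' → r' ≤ b →
      r' - l' < r - l ∨ (r' - l' = r - l ∧ r' ≤ r) := fun l' r' h' hal' hrb' =>
    Prod.Lex.toLex_le_toLex.mp (hle (l', r') ⟨h', hal', hrb'⟩)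
  refine ⟨l, r, ⟨h, hal, hrb, hmaximal⟩, ?_⟩
  rcases hmaximal l₀ r₀ h₀ hal₀ hr₀b with hlt | ⟨heq, _⟩ <;> omega

theorem stmt_4_general (T : ℤ)
    (a b : ℤ) (ha : 1 ≤ a) (hb : b ≤ T) (hab : 3 ≤ b - a + 1) :
    ∃ l r : ℤ, IsLMap T a b l r ∧ b - a + 1 ≤ 4 * (r - l + 1) := by
  obtain ⟨l₀, r₀, h₀, hal₀, hr₀b, hsize⟩ := BinLam.root.exists_quarter_of_subset ha hb hab
  obtain ⟨l, r, hL, hlen⟩ := exists_isLMap_of_binLam (by omega) h₀ hal₀ hr₀b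
  exact ⟨l, r, hL, by omega⟩

theorem stmt_4 (T : ℤ) (hT : 2 ≤ T)
    (a b : ℤ) (ha : 1 ≤ a) (hb : b ≤ T) (hab : 3 ≤ b - a + 1) :
    ∃ l r : ℤ, IsLMap T a b l r ∧ b - a + 1 ≤ 4 * (r - l + 1) :=
  stmt_4_general T a b ha hb hab
end

section
/- Let T ≥ 2 be an integer and let L(T) be the binary laminar family of subintervals of [1,T] with mapping 𝔏. Then for every χ ∈ L(T), the union of all intervals χ' ⊆ [1,T] with |χ'| ≥ 3 and 𝔏(χ') = χ is contained in a single interval of size at most 4·|χ|; in particular this union contains at most 4·|χ| time slots. -/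
/-- Halving chains: `IsHalf c n` means `c` appears in the chain `n, ⌊n/2⌋, ⌊⌊n/2⌋/2⌋, …`. -/
inductive IsHalf (c : ℤ) : ℤ → Prop
  | refl : IsHalf c c
  | step {n : ℤ} : IsHalf c (n / 2) → IsHalf c n

theorem isHalf_le {c : ℤ} (hc : 1 ≤ c) : ∀ {n : ℤ}, IsHalf c n → c ≤ n := by
  intro n h
  induction h with
  | refl => exact le_refl c
  | step h ih => omega

theorem binlam_bounds (T : ℤ) (hT : 1 ≤ T) {l r : ℤ} (h : BinLam T l r) :
    1 ≤ l ∧ l ≤ r ∧ r ≤ T := by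
  induction h with
  | root => omega
  | left h hr ih => omega
  | right h hr ih => omega

/-- Strong suffix lemma: a suffix `[a,q]` (with `a ≤ q-1`) of a node `[p,q]`
contains a node of size at least half the suffix length. -/
theorem suffix_lemma (T : ℤ) : ∀ (n : ℕ) (p q : ℤ), (q - p).toNat ≤ n →
    BinLam T p q → ∀ a, p ≤ a → a ≤ q - 1 →
    ∃ l' r', BinLam T l' r' ∧ a ≤ l' ∧ r' ≤ q ∧ q - a + 1 ≤ 2 * (r' - l' + 1) := by
  intro n
  induction n with
  | zero =>
    intro p q hn h a hpa haq
    exfalso; omega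
  | succ n ih =>
    intro p q hn h a hpa haq
    by_cases hap : a = p
    · exact ⟨p, q, h, by omega, le_refl _, by omega⟩
    · have hq : 2 ≤ q - p := by omega
      by_cases ham : a ≤ (p + q) / 2
      · exact ⟨(p + q) / 2 + 1, q, BinLam.right h (by omega), by omega, le_refl _, by omega⟩
      · exact ih ((p + q) / 2 + 1) q (by omega) (BinLam.right h (by omega)) a (by omega) haq

/-- Descent lemma: inside a node whose size tracks a halving chain containing `c`,
any prefix of length `≥ c+1` contains a node of size `≥ c`. -/
theorem desc_lemma (T c : ℤ) (hc : 1 ≤ c) : ∀ t, IsHalf c t →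
    ∀ p q b, BinLam T p q → t - 1 ≤ q - p + 1 → q - p + 1 ≤ t + 1 →
    (c < t ∨ t ≤ q - p + 1) → p + c ≤ b →
    ∃ l' r', BinLam T l' r' ∧ p ≤ l' ∧ r' ≤ b ∧ c ≤ r' - l' + 1 := by
  intro t hh
  induction hh with
  | refl =>
    intro p q b hS h1 h2 h3 hb
    have h3' : c ≤ q - p + 1 := by rcases h3 with h | h <;> omega
    exact ⟨p, q, hS, le_refl _, by omega, by omega⟩
  | step h ih =>
    rename_i n
    intro p q b hS h1 h2 h3 hb
    have hcn : c ≤ n / 2 := isHalf_le hc h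
    by_cases hqb : q ≤ b
    · exact ⟨p, q, hS, le_refl _, hqb, by omega⟩
    · have h5 : 1 < q - p := by omega
      exact ih p ((p + q) / 2) b (BinLam.left hS h5) (by omega) (by omega)
        (Or.inr (by omega)) hb

/-- Left neighborhood lemma: to the left of a node `[x,R]`, any region `[a, x-1]`
contains a node of size at least half the region, or of size at least `|[x,R]|`. -/
theorem leftNbr (T : ℤ) : ∀ x R, BinLam T x R → ∀ a, 1 ≤ a → a ≤ x - 2 →
    ∃ l' r', BinLam T l' r' ∧ a ≤ l' ∧ r' ≤ x - 1 ∧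
      (x - a ≤ 2 * (r' - l' + 1) ∨ R - x + 1 ≤ r' - l' + 1) := by
  intro x R h
  induction h with
  | root =>
    intro a h1 h2; exfalso; omega
  | left hP hr ih =>
    rename_i l r
    intro a h1 h2
    obtain ⟨l', r', hN, ha', hr', hd⟩ := ih a h1 h2
    refine ⟨l', r', hN, ha', hr', ?_⟩
    rcases hd with hd | hd
    · exact Or.inl hd
    · exact Or.inr (by omega)
  | right hP hr ih =>
    rename_i l r
    intro a h1 h2
    by_cases hal : l ≤ a
    · obtain ⟨l', r', hN, ha', hr', hsz⟩ :=
        suffix_lemma T ((((l + r) / 2) - l).toNat) l ((l + r) / 2) (le_refl _)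
          (BinLam.left hP hr) a hal (by omega)
      exact ⟨l', r', hN, ha', by omega, Or.inl (by omega)⟩
    · exact ⟨l, (l + r) / 2, BinLam.left hP hr, by omega, by omega, Or.inr (by omega)⟩

/-- Right neighborhood lemma: to the right of a node `[L,r]`, for any `c` in the
halving chain of `⌊|[L,r]|/2⌋` and any `b ≥ r + c + 1` (with `b ≤ T`), the region
`[r+1, b]` contains a node of size at least `c`. -/
theorem rightNbr (T : ℤ) : ∀ L r, BinLam T L r →
    ∀ c b, 1 ≤ c → IsHalf c ((r - L + 1) / 2) → r + c + 1 ≤ b → b ≤ T →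
    ∃ l' r', BinLam T l' r' ∧ r + 1 ≤ l' ∧ r' ≤ b ∧ c ≤ r' - l' + 1 := by
  intro L r h
  induction h with
  | root =>
    intro c b hc hh hb hbT; exfalso; omega
  | left hP hr ih =>
    rename_i l r
    intro c b hc hh hb hbT
    have hS : BinLam T ((l + r) / 2 + 1) r := BinLam.right hP hr
    have hle := isHalf_le hc hh
    obtain ⟨l', r', hN, h1, h2, h3⟩ :=
      desc_lemma T c hc ((l + r) / 2 - l + 1) (IsHalf.step hh)
        ((l + r) / 2 + 1) r b hS (by omega) (by omega) (Or.inl (by omega)) (by omega)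
    exact ⟨l', r', hN, by omega, h2, h3⟩
  | right hP hr ih =>
    rename_i l r
    intro c b hc hh hb hbT
    have hh2 : IsHalf c (((r - l + 1) / 2) / 2) := by
      rw [show (r - ((l + r) / 2 + 1) + 1) = (r - l + 1) / 2 from by omega] at hh
      exact hh
    exact ih c b hc (IsHalf.step hh2) hb hbT

/-- Left bound: any interval mapping to `[l,r]` starts at `a ≥ l - 2(r-l+1)`. -/
theorem left_bound (T l r a b : ℤ) (hT : 1 ≤ T) (hnode : BinLam T l r)
    (ha1 : 1 ≤ a) (hal : a ≤ l) (hrb : r ≤ b)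
    (hmax : ∀ l' r' : ℤ, BinLam T l' r' → a ≤ l' → r' ≤ b →
      (r' - l' < r - l ∨ (r' - l' = r - l ∧ r' ≤ r))) :
    l - 2 * (r - l + 1) ≤ a := by
  cases hnode with
  | root => omega
  | left hP hr =>
    rename_i R
    by_contra hcon
    have h2 : a ≤ l - 2 := by omega
    obtain ⟨l', r', hN, h1', h2', h3'⟩ := leftNbr T l R hP a ha1 h2
    have hm := hmax l' r' hN h1' (by omega)
    rcases h3' with h3' | h3' <;> rcases hm with h | h <;> omega
  | right hP hr =>
    rename_i L
    by_cases haL : a ≤ L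
    · exfalso
      rcases hmax L r hP haL hrb with h | h <;> omega
    · omega

/-- Right bound: any interval mapping to `[l,r]` ends at `b ≤ r + (r-l+1)`. -/
theorem right_bound (T l r a b : ℤ) (hT : 1 ≤ T) (hbT : b ≤ T) (hnode : BinLam T l r)
    (ha1 : 1 ≤ a) (hal : a ≤ l) (hrb : r ≤ b)
    (hmax : ∀ l' r' : ℤ, BinLam T l' r' → a ≤ l' → r' ≤ b →
      (r' - l' < r - l ∨ (r' - l' = r - l ∧ r' ≤ r))) :
    b ≤ r + (r - l + 1) := by
  cases hnode with
  | root => omega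
  | left hP hr =>
    rename_i R
    by_contra hcon
    have hRb : R ≤ b := by omega
    rcases hmax l R hP hal hRb with h | h <;> omega
  | right hP hr =>
    rename_i L
    by_contra hcon
    have hc1 : 1 ≤ r - (L + r) / 2 := by omega
    have hh : IsHalf (r - (L + r) / 2) ((r - L + 1) / 2) := by
      rw [show r - (L + r) / 2 = (r - L + 1) / 2 from by omega]
      exact IsHalf.refl
    obtain ⟨l', r', hN, h1', h2', h3'⟩ :=
      rightNbr T L r hP (r - (L + r) / 2) b hc1 hh (by omega) hbT
    have hb' := binlam_bounds T hT hN
    rcases hmax l' r' hN (by omega) h2' with h | h <;> omega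

/-- The union of all intervals `[a,b] ⊆ [1,T]` of size at least `3` with
`𝔏([a,b]) = [l,r]` is contained in a single interval `[u,v]` of size at most
`4 * |[l,r]|`; in particular this union has at most `4 * |[l,r]|` time slots. -/
theorem stmt_5 (T : ℤ) (hT : 2 ≤ T)
    (l r : ℤ) (hnode : BinLam T l r) :
    ∃ u v : ℤ, u ≤ v ∧ v - u + 1 ≤ 4 * (r - l + 1) ∧
      ∀ a b : ℤ, 1 ≤ a → b ≤ T → 3 ≤ b - a + 1 → IsLMap T a b l r →
        u ≤ a ∧ b ≤ v := by
  obtain ⟨h1, h2, h3⟩ := binlam_bounds T (by omega) hnode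
  refine ⟨l - 2 * (r - l + 1), r + (r - l + 1), by omega, by omega, ?_⟩
  intro a b ha hbT hsz hmap
  obtain ⟨hn', hal, hrb, hmax⟩ := hmap
  exact ⟨left_bound T l r a b (by omega) hnode ha hal hrb hmax,
    right_bound T l r a b (by omega) hbT hnode ha hal hrb hmax⟩
end

section
/- Let (J, m) be a laminar MaxT instance, let λ ∈ (0,1), and set α = λ(1−λ)/(1 − λ + λ/m). Suppose S ⊆ J is a subset such that every j ∈ S satisfies p_j ≤ λ·|χ_j| and s_j ≤ α, and such that for every interval χ ∈ {χ_j : j ∈ J}, Σ_{j∈S : χ_j ⊆ χ} a_j ≤ (1−α)(1−λ)·m·|χ|. Then S is feasibly schedulable on the m hosts. -/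
open Finset

theorem stmt_8 {ι : Type*} [Fintype ι]
    (m : ℕ) (hm : 1 ≤ m)
    (r d : ι → ℤ) (p : ι → ℕ) (s : ι → ℝ)
    (hrd : ∀ j, r j ≤ d j)
    (hp1 : ∀ j, 1 ≤ p j)
    (hpw : ∀ j, (p j : ℤ) ≤ d j - r j + 1)
    (hs0 : ∀ j, 0 < s j) (hs1 : ∀ j, s j ≤ 1)
    (hlamin : LaminarWindows r d)
    (lam : ℝ) (hlam0 : 0 < lam) (hlam1 : lam < 1)
    (α : ℝ) (hα : α = lam * (1 - lam) / (1 - lam + lam / m))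
    (S : Finset ι)
    (hslack : ∀ j ∈ S, (p j : ℝ) ≤ lam * ((d j - r j + 1 : ℤ) : ℝ))
    (hsmall : ∀ j ∈ S, s j ≤ α)
    (harea : ∀ k : ι,
      ∑ j ∈ S.filter (fun j => Finset.Icc (r j) (d j) ⊆ Finset.Icc (r k) (d k)),
          (p j : ℝ) * s j
        ≤ (1 - α) * (1 - lam) * m * ((d k - r k + 1 : ℤ) : ℝ)) :
    Schedulable m r d p s S := by

  classical
  have hm0 : (0:ℝ) < m := by exact_mod_cast hm
  have hden : 0 < 1 - lam + lam / m := by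
    have h1 : 0 < lam / m := div_pos hlam0 hm0
    linarith
  have hα0 : 0 < α := by
    rw [hα]; exact div_pos (mul_pos hlam0 (by linarith)) hden
  have hα1 : α < 1 := by
    rw [hα, div_lt_one hden]
    have h1 : 0 < lam / m := div_pos hlam0 hm0
    nlinarith
  clear hα
  revert hslack hsmall harea
  induction S using Finset.strongInduction with
  | _ S ih =>
    intro hslack hsmall harea
    rcases S.eq_empty_or_nonempty with hSe | hne
    · subst hSe
      exact ⟨fun _ => ∅, fun _ _ => ⟨0, hm⟩, by simp, by simp⟩
    obtain ⟨j, hjS, hmax⟩ :=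
      Finset.exists_max_image S (fun k => (Finset.Icc (r k) (d k)).card) hne
    set S' := S.erase j with hS'
    have hjS' : j ∉ S' := Finset.notMem_erase j S
    have hsub : S' ⊂ S := Finset.erase_ssubset hjS
    have hmemS : ∀ k ∈ S', k ∈ S := fun k hk => Finset.mem_of_mem_erase hk
    obtain ⟨Tj, h, hT, hcap⟩ := ih S' hsub
      (fun k hk => hslack k (hmemS k hk))
      (fun k hk => hsmall k (hmemS k hk))
      (fun k => le_trans (Finset.sum_le_sum_of_subset_of_nonneg
          (Finset.filter_subset_filter _ (Finset.erase_subset j S))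
          (fun i _ _ => mul_nonneg (Nat.cast_nonneg _) (hs0 i).le)) (harea k))
    set χj := Finset.Icc (r j) (d j) with hχj
    have hcard : (χj.card : ℝ) = ((d j - r j + 1 : ℤ) : ℝ) := by
      have h2 : (χj.card : ℤ) = d j - r j + 1 := by
        rw [hχj, Int.card_Icc]
        have := hrd j
        omega
      exact_mod_cast h2
    set load : ℤ → ℝ := fun t => ∑ k ∈ S'.filter (fun k => t ∈ Tj k), s k with hload
    have hload0 : ∀ t, 0 ≤ load t := fun t =>
      Finset.sum_nonneg fun k _ => (hs0 k).le
    have hAbound : ∑ t ∈ χj, load t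
        ≤ (1 - α) * (1 - lam) * m * ((d j - r j + 1 : ℤ) : ℝ) := by
      calc ∑ t ∈ χj, load t
          = ∑ t ∈ χj, ∑ k ∈ S', (if t ∈ Tj k then s k else 0) := by
            exact Finset.sum_congr rfl fun t _ => Finset.sum_filter _ _
        _ = ∑ k ∈ S', ∑ t ∈ χj, (if t ∈ Tj k then s k else 0) := Finset.sum_comm
        _ = ∑ k ∈ S', ((χj ∩ Tj k).card : ℝ) * s k := by
            refine Finset.sum_congr rfl fun k _ => ?_
            rw [Finset.sum_ite_mem, Finset.sum_const, nsmul_eq_mul]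
        _ ≤ ∑ k ∈ S'.filter (fun k => Finset.Icc (r k) (d k) ⊆ χj), (p k : ℝ) * s k := by
            rw [← Finset.sum_filter_add_sum_filter_not S'
              (fun k => Finset.Icc (r k) (d k) ⊆ χj)
              (fun k => ((χj ∩ Tj k).card : ℝ) * s k)]
            have hz : ∑ k ∈ S'.filter (fun k => ¬ Finset.Icc (r k) (d k) ⊆ χj),
                ((χj ∩ Tj k).card : ℝ) * s k = 0 := by
              refine Finset.sum_eq_zero fun k hk => ?_
              obtain ⟨hk1, hk2⟩ := Finset.mem_filter.mp hk
              have hdisj : Disjoint χj (Finset.Icc (r k) (d k)) := by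
                rcases hlamin k j with hc | hc | hc
                · exact absurd hc hk2
                · have heq := Finset.eq_of_subset_of_card_le hc (hmax k (hmemS k hk1))
                  refine absurd ?_ hk2
                  rw [hχj, ← heq]
                · exact hc.symm
              have hTk := (hT k hk1).1
              have hempty : χj ∩ Tj k = ∅ :=
                Finset.disjoint_iff_inter_eq_empty.mp (hdisj.mono_right hTk)
              rw [hempty]
              simp
            rw [hz, add_zero]
            refine Finset.sum_le_sum fun k hk => ?_
            have hk1 := (Finset.mem_filter.mp hk).1
            have hle : (χj ∩ Tj k).card ≤ p k := by
              rw [← (hT k hk1).2]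
              exact Finset.card_le_card (Finset.inter_subset_right)
            exact mul_le_mul_of_nonneg_right (by exact_mod_cast hle) (hs0 k).le
        _ ≤ ∑ k ∈ S.filter (fun k => Finset.Icc (r k) (d k) ⊆ χj), (p k : ℝ) * s k :=
            Finset.sum_le_sum_of_subset_of_nonneg
              (Finset.filter_subset_filter _ (Finset.erase_subset j S))
              (fun i _ _ => mul_nonneg (Nat.cast_nonneg _) (hs0 i).le)
        _ ≤ _ := harea j
    set U := χj.filter (fun t => load t ≤ m * (1 - α)) with hU
    have hUcard : p j ≤ U.card := by
      set Us := χj.filter (fun t => ¬ load t ≤ m * (1 - α)) with hUs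
      have hsum1 : (Us.card : ℝ) * ((m:ℝ) * (1 - α)) ≤ ∑ t ∈ χj, load t := by
        calc (Us.card : ℝ) * ((m:ℝ) * (1 - α)) = ∑ _t ∈ Us, (m:ℝ) * (1 - α) := by
              rw [Finset.sum_const, nsmul_eq_mul]
          _ ≤ ∑ t ∈ Us, load t :=
              Finset.sum_le_sum fun t ht =>
                (le_of_lt (lt_of_not_ge (Finset.mem_filter.mp ht).2))
          _ ≤ ∑ t ∈ χj, load t :=
              Finset.sum_le_sum_of_subset_of_nonneg (Finset.filter_subset _ _)
                (fun t _ _ => hload0 t)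
      have hmα : 0 < (m:ℝ) * (1 - α) := mul_pos hm0 (by linarith)
      have hUs_le : (Us.card : ℝ) ≤ (1 - lam) * ((d j - r j + 1 : ℤ) : ℝ) := by
        have h2 : (Us.card : ℝ) * ((m:ℝ) * (1 - α))
            ≤ ((1 - lam) * ((d j - r j + 1 : ℤ) : ℝ)) * ((m:ℝ) * (1 - α)) := by
          calc (Us.card : ℝ) * ((m:ℝ) * (1 - α)) ≤ (1 - α) * (1 - lam) * m * ((d j - r j + 1 : ℤ) : ℝ) :=
                hsum1.trans hAbound
            _ = ((1 - lam) * ((d j - r j + 1 : ℤ) : ℝ)) * ((m:ℝ) * (1 - α)) := by ring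
        exact le_of_mul_le_mul_right h2 hmα
      have hcards : U.card + Us.card = χj.card := by
        rw [hU, hUs]
        exact Finset.card_filter_add_card_filter_not _
      have hge : lam * ((d j - r j + 1 : ℤ) : ℝ) ≤ (U.card : ℝ) := by
        have h3 : (U.card : ℝ) + (Us.card : ℝ) = (χj.card : ℝ) := by exact_mod_cast hcards
        rw [hcard] at h3
        linarith
      exact_mod_cast (hslack j hjS).trans hge
    have hhost : ∀ t ∈ U, ∃ i : Fin m,
        ∑ k ∈ S'.filter (fun k => t ∈ Tj k ∧ h k t = i), s k ≤ 1 - α := by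
      intro t ht
      by_contra hcon
      push_neg at hcon
      have hlt : ∀ i : Fin m, 1 - α <
          ∑ k ∈ (S'.filter (fun k => t ∈ Tj k)).filter (fun k => h k t = i), s k := by
        intro i
        rw [Finset.filter_filter]
        exact hcon i
      have hsumfib : ∑ i : Fin m,
          ∑ k ∈ (S'.filter (fun k => t ∈ Tj k)).filter (fun k => h k t = i), s k = load t :=
        Finset.sum_fiberwise _ _ _
      have hne' : (Finset.univ : Finset (Fin m)).Nonempty := ⟨⟨0, hm⟩, Finset.mem_univ _⟩
      have h3 : ∑ _i : Fin m, (1 - α) < ∑ i : Fin m,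
          ∑ k ∈ (S'.filter (fun k => t ∈ Tj k)).filter (fun k => h k t = i), s k :=
        Finset.sum_lt_sum_of_nonempty hne' (fun i _ => hlt i)
      rw [hsumfib] at h3
      have h4 : ∑ _i : Fin m, (1 - α) = (m:ℝ) * (1 - α) := by
        rw [Finset.sum_const, Finset.card_univ, Fintype.card_fin, nsmul_eq_mul]
      rw [h4] at h3
      exact absurd (Finset.mem_filter.mp ht).2 (not_le.mpr h3)
    obtain ⟨T, hTU, hTcard⟩ := Finset.exists_subset_card_eq hUcard
    set pick : ℤ → Fin m :=
      fun t => if ht : t ∈ U then Classical.choose (hhost t ht) else ⟨0, hm⟩ with hpick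
    have hpickspec : ∀ t ∈ U,
        ∑ k ∈ S'.filter (fun k => t ∈ Tj k ∧ h k t = pick t), s k ≤ 1 - α := by
      intro t ht
      simp only [hpick, dif_pos ht]
      exact Classical.choose_spec (hhost t ht)
    refine ⟨Function.update Tj j T, Function.update h j pick, ?_, ?_⟩
    · intro k hk
      rcases eq_or_ne k j with rfl | hkj
      · rw [Function.update_self]
        exact ⟨hTU.trans (Finset.filter_subset _ _), hTcard⟩
      · rw [Function.update_of_ne hkj]
        exact hT k (Finset.mem_erase.mpr ⟨hkj, hk⟩)
    · intro i t
      have hSins : S = insert j S' := (Finset.insert_erase hjS).symm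
      have hfeq : S'.filter
            (fun k => t ∈ Function.update Tj j T k ∧ Function.update h j pick k t = i)
          = S'.filter (fun k => t ∈ Tj k ∧ h k t = i) := by
        refine Finset.filter_congr fun k hk => ?_
        have hkj : k ≠ j := Finset.ne_of_mem_erase hk
        rw [Function.update_of_ne hkj, Function.update_of_ne hkj]
      rw [hSins, Finset.filter_insert]
      split_ifs with hcond
      · rw [Finset.sum_insert (fun hmem => hjS' (Finset.mem_of_mem_filter j hmem)), hfeq]
        obtain ⟨ht1, ht2⟩ := hcond
        rw [Function.update_self] at ht1 ht2
        have htU : t ∈ U := hTU ht1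
        have h5 := hpickspec t htU
        rw [ht2] at h5
        have h6 := hsmall j hjS
        linarith
      · rw [hfeq]
        exact hcap i t
end

section
/- Let R be a finite set, let X : R → ℝ satisfy 0 ≤ X_t ≤ 1 for every t ∈ R, and let p ∈ ℕ be such that Σ_{t∈R} X_t ≥ p. Then there exist p pairwise disjoint subsets R_1, …, R_p of R such that Σ_{t∈R_k} X_t ≥ 1/2 for every k ∈ {1,…,p}. -/
open Finset

lemma aux_chunk {ι : Type*} (X : ι → ℝ) :
    ∀ R : Finset ι, (∀ t ∈ R, 0 ≤ X t) → (∀ t ∈ R, X t ≤ 1) →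
    (1 / 2 : ℝ) ≤ ∑ t ∈ R, X t →
    ∃ S ⊆ R, (1 / 2 : ℝ) ≤ ∑ t ∈ S, X t ∧ ∑ t ∈ S, X t ≤ 1 := by
  classical
  intro R
  induction R using Finset.strongInduction with
  | _ R ih =>
    intro h0 h1 hs
    by_cases hbig : ∃ t ∈ R, (1/2 : ℝ) ≤ X t
    · obtain ⟨t, ht, h⟩ := hbig
      exact ⟨{t}, by simpa using ht, by simpa using h, by simpa using h1 t ht⟩
    · push_neg at hbig
      by_cases hle : ∑ t ∈ R, X t ≤ 1
      · exact ⟨R, subset_rfl, hs, hle⟩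
      · push_neg at hle
        have hne : R.Nonempty := by
          rw [Finset.nonempty_iff_ne_empty]
          rintro rfl
          simp at hle
          linarith
        obtain ⟨t, ht⟩ := hne
        have hsum : ∑ x ∈ R.erase t, X x = ∑ x ∈ R, X x - X t :=
          Finset.sum_erase_eq_sub ht
        obtain ⟨S, hS, h1', h2'⟩ := ih (R.erase t) (Finset.erase_ssubset ht)
          (fun x hx => h0 x (Finset.erase_subset _ _ hx))
          (fun x hx => h1 x (Finset.erase_subset _ _ hx))
          (by have := hbig t ht; linarith)
        exact ⟨S, hS.trans (Finset.erase_subset _ _), h1', h2'⟩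

theorem stmt_11 {ι : Type*} (R : Finset ι) (X : ι → ℝ)
    (hX0 : ∀ t ∈ R, 0 ≤ X t) (hX1 : ∀ t ∈ R, X t ≤ 1)
    (p : ℕ) (hp : (p : ℝ) ≤ ∑ t ∈ R, X t) :
    ∃ Rk : Fin p → Finset ι,
      (∀ k, Rk k ⊆ R) ∧
      (∀ k k', k ≠ k' → Disjoint (Rk k) (Rk k')) ∧
      (∀ k, (1 : ℝ) / 2 ≤ ∑ t ∈ Rk k, X t) := by
  classical
  induction p generalizing R with
  | zero => exact ⟨fun k => ∅, fun k => k.elim0, fun k => k.elim0, fun k => k.elim0⟩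
  | succ p ih =>
    have hp' : (p : ℝ) + 1 ≤ ∑ t ∈ R, X t := by push_cast at hp; linarith
    obtain ⟨S, hSR, hS1, hS2⟩ := aux_chunk X R hX0 hX1 (by linarith)
    have key : (p : ℝ) ≤ ∑ t ∈ R \ S, X t := by
      rw [Finset.sum_sdiff_eq_sub hSR]; linarith
    obtain ⟨Rk', h1, h2, h3⟩ := ih (R \ S)
      (fun t ht => hX0 t (Finset.sdiff_subset ht))
      (fun t ht => hX1 t (Finset.sdiff_subset ht)) key
    have hdisj : ∀ j, Disjoint (Rk' j) S := fun j =>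
      Finset.sdiff_disjoint.mono_left (h1 j)
    refine ⟨Fin.cons S Rk', ?_, ?_, ?_⟩
    · intro k
      induction k using Fin.cases with
      | zero => simpa using hSR
      | succ j => simpa using (h1 j).trans Finset.sdiff_subset
    · intro k k' hne
      induction k using Fin.cases with
      | zero =>
        induction k' using Fin.cases with
        | zero => exact absurd rfl hne
        | succ j => simpa using (hdisj j).symm
      | succ j =>
        induction k' using Fin.cases with
        | zero => simpa using hdisj j
        | succ j' =>
          simpa using h2 j j' (fun h => hne (by rw [h]))
    · intro k
      induction k using Fin.cases with
      | zero => simpa using hS1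
      | succ j => simpa using h3 j
end

section
/- Let d ≥ 1 and let V be a finite set of vectors s_1, …, s_n ∈ [0,1]^d whose componentwise sum satisfies Σ_{j∈V} s_j ≤ (1,…,1) (i.e., in every coordinate the sum is at most 1). Then V can be partitioned into at most d parts V_1, …, V_d such that Σ_{j∈V_i} ‖s_j‖_∞ ≤ 1 for every i, where ‖s_j‖_∞ = max of the d coordinates of s_j. In particular, Σ_{j∈V} ‖s_j‖_∞ ≤ d. -/
open Finset

/-- If finitely many vectors in `[0,1]^d` have componentwise sum at most `1` in every
coordinate, then they can be partitioned into at most `d` parts, each of which has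
total `ℓ∞`-norm at most `1`; in particular the total `ℓ∞`-norm is at most `d`.
(Here `‖·‖` on `Fin d → ℝ` is the sup norm.) -/
theorem stmt_12 {ι : Type*} [DecidableEq ι] (d : ℕ) (hd : 1 ≤ d)
    (V : Finset ι) (s : ι → Fin d → ℝ)
    (hs0 : ∀ j ∈ V, ∀ i, 0 ≤ s j i) (hs1 : ∀ j ∈ V, ∀ i, s j i ≤ 1)
    (hsum : ∀ i : Fin d, ∑ j ∈ V, s j i ≤ 1) :
    (∃ f : ι → Fin d,
      ∀ i : Fin d, ∑ j ∈ V.filter (fun j => f j = i), ‖s j‖ ≤ 1) ∧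
    ∑ j ∈ V, ‖s j‖ ≤ (d : ℝ) := by
  haveI : Nonempty (Fin d) := ⟨⟨0, hd⟩⟩
  have hmax : ∀ j : ι, ∃ i : Fin d, ∀ i', s j i' ≤ s j i := fun j =>
    Finite.exists_max (s j)
  set f : ι → Fin d := fun j => Classical.choose (hmax j) with hf
  have hnorm : ∀ j ∈ V, ‖s j‖ ≤ s j (f j) := by
    intro j hj
    refine pi_norm_le_iff_of_nonneg (hs0 j hj (f j)) |>.2 fun i => ?_
    rw [Real.norm_eq_abs, abs_of_nonneg (hs0 j hj i)]
    exact Classical.choose_spec (hmax j) i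
  have key : ∀ i : Fin d, ∑ j ∈ V.filter (fun j => f j = i), ‖s j‖ ≤ 1 := by
    intro i
    calc ∑ j ∈ V.filter (fun j => f j = i), ‖s j‖
        ≤ ∑ j ∈ V.filter (fun j => f j = i), s j i := by
          refine Finset.sum_le_sum fun j hj => ?_
          obtain ⟨hjV, hji⟩ := Finset.mem_filter.1 hj
          simpa [hji] using hnorm j hjV
      _ ≤ ∑ j ∈ V, s j i := by
          refine Finset.sum_le_sum_of_subset_of_nonneg (Finset.filter_subset _ _)
            fun j hj _ => hs0 j hj i
      _ ≤ 1 := hsum i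
  refine ⟨⟨f, key⟩, ?_⟩
  calc ∑ j ∈ V, ‖s j‖
      = ∑ i : Fin d, ∑ j ∈ V.filter (fun j => f j = i), ‖s j‖ :=
        (Finset.sum_fiberwise V f (fun j => ‖s j‖)).symm
    _ ≤ ∑ i : Fin d, (1 : ℝ) := Finset.sum_le_sum fun i _ => key i
    _ = (d : ℝ) := by simp
end

section
/- Let T ≥ 1 be an integer and let J be a finite set of jobs, where each job j has an integer processing length p_j with 1 ≤ p_j ≤ T and a size s_j ∈ (0,1]. Then one can choose for each job j a set T_j ⊆ {1,…,T} of exactly p_j time slots such that the resulting loads are balanced to within one unit: for any two time slots t, t' ∈ {1,…,T}, |Σ_{j : t ∈ T_j} s_j − Σ_{j : t' ∈ T_j} s_j| ≤ 1. -/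
/-!
Among all schedules giving job `j` exactly `p j` slots, take one minimising the potential
`∑ₜ load(t)²`. If some slot `t` carried more than `1` above another slot `t'`, a job covering
`t` but not `t'` would exist, and moving it from `t` to `t'` shifts `s j ∈ (0, 1]` of load
from `t` to `t'`, strictly lowering the potential.
-/

open Finset

section Load

variable {ι α : Type*} [Fintype ι] [DecidableEq α]

def load (s : ι → ℝ) (c : ι → Finset α) (u : α) : ℝ := ∑ j with u ∈ c j, s j

theorem load_eq_sum_ite (s : ι → ℝ) (c : ι → Finset α) (u : α) :
    load s c u = ∑ j, if u ∈ c j then s j else 0 :=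
  sum_filter _ _

theorem load_update [DecidableEq ι] (s : ι → ℝ) (c : ι → Finset α) (j : ι) (A : Finset α)
    (u : α) :
    load s (Function.update c j A) u =
      load s c u - (if u ∈ c j then s j else 0) + (if u ∈ A then s j else 0) := by
  simp only [load_eq_sum_ite]
  rw [← add_sum_erase _ _ (mem_univ j), ← add_sum_erase _ _ (mem_univ j),
    sum_congr rfl fun k hk => by rw [Function.update_of_ne (ne_of_mem_erase hk)],
    Function.update_self]
  ring

theorem exists_mem_notMem_of_load_lt {s : ι → ℝ} (hs : ∀ j, 0 ≤ s j) {c : ι → Finset α}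
    {t t' : α} (h : load s c t' < load s c t) : ∃ j, t ∈ c j ∧ t' ∉ c j := by
  contrapose! h
  exact sum_le_sum_of_subset_of_nonneg
    (fun k hk => mem_filter.mpr ⟨mem_univ k, h k (mem_filter.mp hk).2⟩) fun j _ _ => hs j

end Load

theorem sum_sq_lt_of_transfer {α : Type*} {S : Finset α} {f g : α → ℝ} {t t' : α} {x : ℝ}
    (ht : t ∈ S) (ht' : t' ∈ S) (htt' : t ≠ t')
    (hg : ∀ u, u ≠ t → u ≠ t' → g u = f u) (hgt : g t = f t - x) (hgt' : g t' = f t' + x)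
    (hx : 0 < x) (hxf : x < f t - f t') :
    ∑ u ∈ S, g u ^ 2 < ∑ u ∈ S, f u ^ 2 := by
  rw [← sub_neg, ← sum_sub_distrib,
    sum_eq_add_of_mem t t' ht ht' htt' fun u _ hu => by rw [hg u hu.1 hu.2, sub_self],
    hgt, hgt']
  nlinarith

theorem insert_erase_mem_powersetCard {α : Type*} [DecidableEq α] {S A : Finset α} {n : ℕ}
    {t t' : α} (hA : A ∈ S.powersetCard n) (ht : t ∈ A) (ht'A : t' ∉ A) (ht' : t' ∈ S) :
    insert t' (A.erase t) ∈ S.powersetCard n := by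
  rw [mem_powersetCard] at hA ⊢
  refine ⟨insert_subset ht' ((erase_subset t A).trans hA.1), ?_⟩
  rw [card_insert_of_notMem fun h => ht'A (mem_of_mem_erase h), card_erase_of_mem ht, ← hA.2,
    Nat.sub_add_cancel (card_pos.mpr ⟨t, ht⟩)]

section Balancing

variable {ι α : Type*} [Fintype ι] [DecidableEq ι] [DecidableEq α]
  {S : Finset α} {p : ι → ℕ} {s : ι → ℝ}

theorem load_sub_le_one_of_isMinOn (hs0 : ∀ j, 0 < s j) (hs1 : ∀ j, s j ≤ 1)
    {c : ι → Finset α} (hc : c ∈ Fintype.piFinset fun j => S.powersetCard (p j))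
    (hmin : IsMinOn (fun c => ∑ u ∈ S, load s c u ^ 2)
      (Fintype.piFinset fun j => S.powersetCard (p j)) c)
    {t t' : α} (ht : t ∈ S) (ht' : t' ∈ S) :
    load s c t - load s c t' ≤ 1 := by
  by_contra! hgap
  obtain ⟨j, htj, ht'j⟩ :=
    exists_mem_notMem_of_load_lt (fun j => (hs0 j).le) (show load s c t' < load s c t by linarith)
  have htt' : t ≠ t' := by rintro rfl; exact ht'j htj
  set c' := Function.update c j (insert t' ((c j).erase t))
  have hc' : c' ∈ Fintype.piFinset fun j => S.powersetCard (p j) := by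
    rw [Fintype.mem_piFinset] at hc ⊢
    intro k
    rcases eq_or_ne k j with rfl | hk
    · simpa [c'] using insert_erase_mem_powersetCard (hc k) htj ht'j ht'
    · simpa [c', Function.update_of_ne hk] using hc k
  refine (isMinOn_iff.mp hmin c' hc').not_gt
    (sum_sq_lt_of_transfer (x := s j) ht ht' htt' ?_ ?_ ?_ (hs0 j) (by linarith [hs1 j]))
  · intro u hut hut'
    by_cases hu : u ∈ c j <;> simp [c', load_update, hu, hut, hut']
  · simp [c', load_update, htj, htt']
  · simp [c', load_update, ht'j]

theorem exists_load_sub_le_one (hp : ∀ j, p j ≤ #S) (hs0 : ∀ j, 0 < s j) (hs1 : ∀ j, s j ≤ 1) :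
    ∃ c ∈ Fintype.piFinset fun j => S.powersetCard (p j),
      ∀ t ∈ S, ∀ t' ∈ S, load s c t - load s c t' ≤ 1 := by
  have hne : (Fintype.piFinset fun j => S.powersetCard (p j)).Nonempty :=
    Fintype.piFinset_nonempty.mpr fun j => powersetCard_nonempty.mpr (hp j)
  obtain ⟨c, hc, hmin⟩ := exists_min_image _ (fun c => ∑ u ∈ S, load s c u ^ 2) hne
  exact ⟨c, hc, fun t ht t' ht' =>
    load_sub_le_one_of_isMinOn hs0 hs1 hc (isMinOn_iff.mpr hmin) ht ht'⟩

end Balancing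

theorem stmt_15_general {ι : Type*} [Fintype ι]
    (T : ℕ)
    (p : ι → ℕ) (s : ι → ℝ)
    (hpT : ∀ j, p j ≤ T)
    (hs0 : ∀ j, 0 < s j) (hs1 : ∀ j, s j ≤ 1) :
    ∃ Tj : ι → Finset ℕ,
      (∀ j, Tj j ⊆ Finset.Icc 1 T ∧ (Tj j).card = p j) ∧
      ∀ t ∈ Finset.Icc 1 T, ∀ t' ∈ Finset.Icc 1 T,
        |(∑ j ∈ Finset.univ.filter (fun j : ι => t ∈ Tj j), s j) -
          (∑ j ∈ Finset.univ.filter (fun j : ι => t' ∈ Tj j), s j)| ≤ 1 := by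
  classical
  obtain ⟨c, hc, hbal⟩ :=
    exists_load_sub_le_one (S := Finset.Icc 1 T) (by simpa using hpT) hs0 hs1
  refine ⟨c, fun j => mem_powersetCard.mp (Fintype.mem_piFinset.mp hc j), ?_⟩
  intro t ht t' ht'
  exact abs_sub_le_iff.mpr ⟨hbal t ht t' ht', hbal t' ht' t ht⟩

/-- Jobs sharing the common time window `{1,…,T}` can be scheduled (job `j` getting
exactly `p j` slots) so that the loads of any two time slots differ by at most one. -/
theorem stmt_15 {ι : Type*} [Fintype ι]
    (T : ℕ) (hT : 1 ≤ T)
    (p : ι → ℕ) (s : ι → ℝ)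
    (hp1 : ∀ j, 1 ≤ p j) (hpT : ∀ j, p j ≤ T)
    (hs0 : ∀ j, 0 < s j) (hs1 : ∀ j, s j ≤ 1) :
    ∃ Tj : ι → Finset ℕ,
      (∀ j, Tj j ⊆ Finset.Icc 1 T ∧ (Tj j).card = p j) ∧
      ∀ t ∈ Finset.Icc 1 T, ∀ t' ∈ Finset.Icc 1 T,
        |(∑ j ∈ Finset.univ.filter (fun j : ι => t ∈ Tj j), s j) -
          (∑ j ∈ Finset.univ.filter (fun j : ι => t' ∈ Tj j), s j)| ≤ 1 :=
  stmt_15_general T p s hpT hs0 hs1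
end
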